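/- arXiv:math/0011111 — 7 statements merged into one kernel-verified Lean document; each statement's English description precedes it below -/
import Mathlib

section
/- For every integer n ≥ 1, every integer e ≥ 1, and every j with 1 ≤ j ≤ n, the (1,j) entry of the e-th power of the matrix R_n equals C(n-1, j-1) · F_{e-1}^{n-j} · F_e^{j-1}, where C denotes the binomial coefficient (and 0^0 = 1). -/
/-- `R n` is the `n × n` integer matrix whose `(i,j)` entry (1-based) is
`C(i-1, n-j)`; with 0-based indices the entry is `C(i, n-1-j)`. -/
def binR (n : ℕ) : Matrix (Fin n) (Fin n) ℤ :=
  fun i j => (Nat.choose i (n - 1 - j) : ℤ)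

open Matrix

/-! The row vector `(C(m,k) a^(m-k) b^k)_k` of coefficients of `(a + b x)^m` is mapped by `R_{m+1}`
to the one of `(b + (a + b) x)^m`. Row 0 of `R^0 = 1` is this vector for `(a, b) = (1, 0)`, so row 0
of `R^(e+1)` is the one for the Fibonacci pair `(F_e, F_{e+1})`. -/

def binomRow {R : Type*} [CommRing R] (m : ℕ) (a b : R) : Fin (m + 1) → R :=
  fun k => (m.choose k : R) * a ^ (m - k) * b ^ (k : ℕ)

theorem sum_range_choose_mul_pow_mul_choose {R : Type*} [CommRing R] (a b : R) {m t : ℕ}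
    (ht : t ≤ m) :
    ∑ k ∈ Finset.range (m + 1), (m.choose k : R) * a ^ (m - k) * b ^ k * (k.choose t : R) =
      (m.choose t : R) * b ^ t * (a + b) ^ (m - t) := by
  rw [show m + 1 = t + (m - t + 1) by omega, Finset.sum_range_add,
    Finset.sum_eq_zero fun k hk => by simp [Nat.choose_eq_zero_of_lt (Finset.mem_range.1 hk)],
    zero_add, add_comm a b, add_pow, Finset.mul_sum]
  refine Finset.sum_congr rfl fun i _ => ?_
  have hchoose : (m.choose (t + i) : R) * ((t + i).choose t : R) =
      (m.choose t : R) * ((m - t).choose i : R) := by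
    have h := Nat.choose_mul (n := m) (k := t + i) (s := t) (by omega)
    rw [Nat.add_sub_cancel_left] at h
    rw [← Nat.cast_mul, ← Nat.cast_mul, h]
  rw [show m - (t + i) = m - t - i by omega, pow_add]
  linear_combination a ^ (m - t - i) * b ^ t * b ^ i * hchoose

theorem binomRow_vecMul_binR (m : ℕ) (a b : ℤ) :
    binomRow m a b ᵥ* binR (m + 1) = binomRow m b (a + b) := by
  ext j
  have hj : (j : ℕ) ≤ m := Nat.le_of_lt_succ j.isLt
  simp only [Matrix.vecMul, dotProduct, binomRow, binR, Nat.add_sub_cancel]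
  rw [Fin.sum_univ_eq_sum_range (fun k => (m.choose k : ℤ) * a ^ (m - k) * b ^ k *
      (k.choose (m - j) : ℤ)), sum_range_choose_mul_pow_mul_choose a b (Nat.sub_le m j),
    Nat.sub_sub_self hj, Nat.choose_symm hj]

theorem one_apply_zero_eq_binomRow (m : ℕ) :
    (1 : Matrix (Fin (m + 1)) (Fin (m + 1)) ℤ) 0 = binomRow m 1 0 := by
  ext k
  rcases Fin.eq_zero_or_eq_succ k with rfl | ⟨k, rfl⟩ <;> simp [binomRow, (Fin.succ_ne_zero _).symm]

theorem binR_pow_succ_apply_zero (m e : ℕ) :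
    (binR (m + 1) ^ (e + 1)) 0 = binomRow m (Nat.fib e : ℤ) (Nat.fib (e + 1)) := by
  induction e with
  | zero =>
    rw [pow_one, ← one_mul (binR _), Matrix.mul_apply_eq_vecMul, one_apply_zero_eq_binomRow,
      binomRow_vecMul_binR]
    simp
  | succ e ih =>
    rw [pow_succ, Matrix.mul_apply_eq_vecMul, ih, binomRow_vecMul_binR, Nat.fib_add_two]
    push_cast
    rfl

theorem stmt_0 (n e : ℕ) (hn : 1 ≤ n) (he : 1 ≤ e)
    (j : ℕ) (hj1 : 1 ≤ j) (hj2 : j ≤ n) :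
    (binR n ^ e) ⟨0, by omega⟩ ⟨j - 1, by omega⟩ =
      (Nat.choose (n - 1) (j - 1) : ℤ) *
        (Nat.fib (e - 1) : ℤ) ^ (n - j) * (Nat.fib e : ℤ) ^ (j - 1) := by
  obtain ⟨m, rfl⟩ := Nat.exists_eq_add_of_le' hn
  obtain ⟨e, rfl⟩ := Nat.exists_eq_add_of_le' he
  have hrow := congrFun (binR_pow_succ_apply_zero m e) ⟨j - 1, by omega⟩
  rw [show m + 1 - j = m - (j - 1) by omega]
  exact hrow
end

section
/- For every integer n ≥ 1, over the field ℤ/3ℤ the matrix R_n satisfies R_n^4 = (-1)^{n+1} · I_n; that is, R_n^4 = -I_n when n is even and R_n^4 = I_n when n is odd (all entries read modulo 3). -/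
open Polynomial Finset

/-- `R n` over `ℤ/3ℤ`: the `(i,j)` entry (1-based) is `C(i-1, n-j)` mod 3. -/
def binR3 (n : ℕ) : Matrix (Fin n) (Fin n) (ZMod 3) :=
  fun i j => (Nat.choose i (n - 1 - j) : ZMod 3)

/-- Key homogeneous-substitution lemma: substituting `(u, v)` into the
degree-`d` homogenization of `a^s * b^(d-s)` (for `a, b` of degree ≤ 1)
gives the product of the substituted linear factors. -/
lemma phi_key {K : Type*} [Field K] (u v a b : K[X]) (hv : v ≠ 0)
    (ha : a.natDegree ≤ 1) (hb : b.natDegree ≤ 1) (d s : ℕ) (hs : s ≤ d) :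
    ∑ j ∈ Finset.range (d + 1), C ((a ^ s * b ^ (d - s)).coeff j) * (u ^ j * v ^ (d - j)) =
      (C (a.coeff 0) * v + C (a.coeff 1) * u) ^ s *
      (C (b.coeff 0) * v + C (b.coeff 1) * u) ^ (d - s) := by
  set F := RatFunc K
  have hinj : Function.Injective (algebraMap K[X] F) := RatFunc.algebraMap_injective K
  apply hinj
  set φ : K[X] →+* F := (algebraMap K[X] F : K[X] →+* F) with hφ
  set f : K →+* F := φ.comp (C : K →+* K[X]) with hf
  have hV : φ v ≠ 0 := fun h => hv (hinj (h.trans (map_zero φ).symm))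
  set t : F := φ u / φ v with ht
  have htv : t * φ v = φ u := div_mul_cancel₀ _ hV
  have hdeg : (a ^ s * b ^ (d - s)).natDegree < d + 1 := by
    have h1 : (a ^ s * b ^ (d - s)).natDegree ≤ (a ^ s).natDegree + (b ^ (d - s)).natDegree :=
      natDegree_mul_le
    have h2 : (a ^ s).natDegree ≤ s * a.natDegree := natDegree_pow_le
    have h3 : (b ^ (d - s)).natDegree ≤ (d - s) * b.natDegree := natDegree_pow_le
    have h4 : s * a.natDegree ≤ s * 1 := Nat.mul_le_mul_left _ ha
    have h5 : (d - s) * b.natDegree ≤ (d - s) * 1 := Nat.mul_le_mul_left _ hb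
    omega
  have key : φ (∑ j ∈ Finset.range (d + 1),
      C ((a ^ s * b ^ (d - s)).coeff j) * (u ^ j * v ^ (d - j))) =
      (φ v) ^ d * eval₂ f t (a ^ s * b ^ (d - s)) := by
    rw [map_sum, eval₂_eq_sum_range' f hdeg t, Finset.mul_sum]
    refine Finset.sum_congr rfl fun j hj => ?_
    have hjd : j ≤ d := Nat.lt_succ_iff.mp (Finset.mem_range.mp hj)
    rw [map_mul, map_mul, map_pow, map_pow]
    have hsplit : (φ v) ^ d = (φ v) ^ (d - j) * (φ v) ^ j := by
      rw [← pow_add]; congr 1; omega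
    have hvt : (φ v) ^ j * t ^ j = (φ u) ^ j := by rw [← mul_pow, mul_comm, htv]
    have hfC : φ (C ((a ^ s * b ^ (d - s)).coeff j)) = f ((a ^ s * b ^ (d - s)).coeff j) := rfl
    rw [hfC, hsplit]
    calc f ((a ^ s * b ^ (d - s)).coeff j) * (φ u ^ j * φ v ^ (d - j))
        = f ((a ^ s * b ^ (d - s)).coeff j) * ((φ v ^ j * t ^ j) * φ v ^ (d - j)) := by
          rw [hvt]
      _ = φ v ^ (d - j) * φ v ^ j * (f ((a ^ s * b ^ (d - s)).coeff j) * t ^ j) := by ring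
  rw [key]
  have heval : ∀ p : K[X], p.natDegree ≤ 1 →
      eval₂ f t p = f (p.coeff 0) + f (p.coeff 1) * t := by
    intro p hp
    conv_lhs => rw [eq_X_add_C_of_natDegree_le_one hp]
    rw [eval₂_add, eval₂_mul, eval₂_C, eval₂_C, eval₂_X]
    ring
  rw [eval₂_mul, eval₂_pow, eval₂_pow, heval a ha, heval b hb]
  have hvd : (φ v) ^ d = (φ v) ^ s * (φ v) ^ (d - s) := by rw [← pow_add]; congr 1; omega
  rw [hvd]
  have hlin : ∀ p : K[X], p.natDegree ≤ 1 →
      (f (p.coeff 0) + f (p.coeff 1) * t) * φ v =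
        φ (C (p.coeff 0) * v + C (p.coeff 1) * u) := by
    intro p hp
    rw [add_mul, mul_assoc, htv, map_add, map_mul, map_mul]
    rfl
  rw [map_mul, map_pow, map_pow, ← hlin a ha, ← hlin b hb, mul_pow, mul_pow]
  ring

lemma binR3_coeff (n : ℕ) (i j : Fin n) :
    binR3 n i j = ((X + 1) ^ (i : ℕ) * X ^ (n - 1 - (i : ℕ)) : (ZMod 3)[X]).coeff j := by
  have hi : (i : ℕ) ≤ n - 1 := by have := i.isLt; omega
  have hj : (j : ℕ) ≤ n - 1 := by have := j.isLt; omega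
  rw [coeff_mul_X_pow', coeff_X_add_one_pow]
  by_cases h : n - 1 - (i : ℕ) ≤ (j : ℕ)
  · rw [if_pos h]
    have h1 : (j : ℕ) - (n - 1 - (i : ℕ)) = (i : ℕ) - (n - 1 - (j : ℕ)) := by omega
    have h2 : n - 1 - (j : ℕ) ≤ (i : ℕ) := by omega
    rw [h1, Nat.choose_symm h2]
    rfl
  · rw [if_neg h]
    have h2 : (i : ℕ) < n - 1 - (j : ℕ) := by omega
    show ((Nat.choose i (n - 1 - j) : ℕ) : ZMod 3) = 0
    rw [Nat.choose_eq_zero_of_lt h2]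
    rfl

theorem stmt_5 (n : ℕ) (hn : 1 ≤ n) :
    binR3 n ^ 4 = ((-1 : ZMod 3) ^ (n + 1)) • (1 : Matrix (Fin n) (Fin n) (ZMod 3)) := by
  obtain ⟨d, rfl⟩ : ∃ d, n = d + 1 := ⟨n - 1, by omega⟩
  have h3 : (3 : (ZMod 3)[X]) = 0 := by
    exact_mod_cast CharP.cast_eq_zero ((ZMod 3)[X]) 3
  have hX1deg : (X + 1 : (ZMod 3)[X]).natDegree ≤ 1 :=
    le_trans (natDegree_add_le _ _) (by simp)
  have hX21deg : (X + (X + 1) : (ZMod 3)[X]).natDegree ≤ 1 :=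
    le_trans (natDegree_add_le _ _) (max_le natDegree_X_le hX1deg)
  have hX1ne : (X + 1 : (ZMod 3)[X]) ≠ 0 := fun h => by
    simpa using congrArg (fun p => p.coeff 0) h
  -- coefficient facts
  have c10 : (X + 1 : (ZMod 3)[X]).coeff 0 = 1 := by simp
  have c11 : (X + 1 : (ZMod 3)[X]).coeff 1 = 1 := by simp [coeff_one]
  have c20 : (X + (X + 1) : (ZMod 3)[X]).coeff 0 = 1 := by simp
  have c21 : (X + (X + 1) : (ZMod 3)[X]).coeff 1 = 2 := by
    simp [coeff_add, coeff_one]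
    norm_num
  have cX0 : (X : (ZMod 3)[X]).coeff 0 = 0 := by simp
  have cX1 : (X : (ZMod 3)[X]).coeff 1 = 1 := by simp
  set q : ℕ → (ZMod 3)[X] := fun i => (X + (X + 1)) ^ i * (X + 1) ^ (d - i) with hq
  -- Step 1: entries of R^2
  have sq_entry : ∀ i k : Fin (d + 1), (binR3 (d + 1) ^ 2) i k = (q (i : ℕ)).coeff k := by
    intro i k
    have hi : (i : ℕ) ≤ d := by have := i.isLt; omega
    rw [pow_two, Matrix.mul_apply]
    have key := phi_key (K := ZMod 3) (X + 1) X (X + 1) X X_ne_zero hX1deg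
      natDegree_X_le d i hi
    rw [c10, c11, cX0, cX1] at key
    have hcoeff := congrArg (fun p => p.coeff (k : ℕ)) key
    simp only [finset_sum_coeff, coeff_C_mul] at hcoeff
    have hrw : ∀ j : Fin (d + 1), binR3 (d + 1) i j * binR3 (d + 1) j k =
        ((X + 1) ^ (i : ℕ) * X ^ (d - (i : ℕ)) : (ZMod 3)[X]).coeff j *
          ((X + 1) ^ (j : ℕ) * X ^ (d - (j : ℕ)) : (ZMod 3)[X]).coeff k := by
      intro j
      rw [binR3_coeff, binR3_coeff]
      simp only [Nat.add_sub_cancel]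
    calc ∑ j : Fin (d + 1), binR3 (d + 1) i j * binR3 (d + 1) j k
        = ∑ j : Fin (d + 1), ((X + 1) ^ (i : ℕ) * X ^ (d - (i : ℕ)) : (ZMod 3)[X]).coeff j *
            ((X + 1) ^ (j : ℕ) * X ^ (d - (j : ℕ)) : (ZMod 3)[X]).coeff k :=
          Finset.sum_congr rfl fun j _ => hrw j
      _ = ∑ j ∈ Finset.range (d + 1),
            ((X + 1) ^ (i : ℕ) * X ^ (d - (i : ℕ)) : (ZMod 3)[X]).coeff j *
            ((X + 1) ^ j * X ^ (d - j) : (ZMod 3)[X]).coeff k :=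
          Fin.sum_univ_eq_sum_range (fun j =>
            ((X + 1) ^ (i : ℕ) * X ^ (d - (i : ℕ)) : (ZMod 3)[X]).coeff j *
            ((X + 1) ^ j * X ^ (d - j) : (ZMod 3)[X]).coeff k) (d + 1)
      _ = ((C 1 * X + C 1 * (X + 1) : (ZMod 3)[X]) ^ (i : ℕ) *
            (C 0 * X + C 1 * (X + 1)) ^ (d - (i : ℕ))).coeff k := hcoeff
      _ = (q (i : ℕ)).coeff k := by
          congr 2
          · rw [map_one, one_mul, one_mul]
          · rw [map_one, map_zero, one_mul, zero_mul, zero_add]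
  -- Step 2: entries of R^4
  have four_entry : ∀ i l : Fin (d + 1), (binR3 (d + 1) ^ 4) i l =
      (2 : ZMod 3) ^ d * (X ^ (i : ℕ) : (ZMod 3)[X]).coeff l := by
    intro i l
    have hi : (i : ℕ) ≤ d := by have := i.isLt; omega
    have hpow : binR3 (d + 1) ^ 4 = binR3 (d + 1) ^ 2 * binR3 (d + 1) ^ 2 := by
      rw [← pow_add]
    rw [hpow, Matrix.mul_apply]
    have key := phi_key (K := ZMod 3) (X + (X + 1)) (X + 1) (X + (X + 1)) (X + 1)
      hX1ne hX21deg hX1deg d i hi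
    rw [c10, c11, c20, c21] at key
    have e1 : (C (1 : ZMod 3) * (X + 1) + C (2 : ZMod 3) * (X + (X + 1)) : (ZMod 3)[X]) =
        C 2 * X := by
      rw [map_one, one_mul]
      rw [map_ofNat]
      linear_combination (X + (1 : (ZMod 3)[X])) * h3
    have e2 : (C (1 : ZMod 3) * (X + 1) + C (1 : ZMod 3) * (X + (X + 1)) : (ZMod 3)[X]) =
        C 2 := by
      rw [map_one, one_mul, one_mul]
      rw [map_ofNat]
      linear_combination (X : (ZMod 3)[X]) * h3
    rw [e1, e2] at key
    have key2 : ∑ j ∈ Finset.range (d + 1), C ((q (i : ℕ)).coeff j) * q j =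
        C ((2 : ZMod 3) ^ d) * X ^ (i : ℕ) := by
      have hCC : (C (2 : ZMod 3)) ^ (i : ℕ) * (C (2 : ZMod 3)) ^ (d - (i : ℕ)) =
          (C ((2 : ZMod 3) ^ d) : (ZMod 3)[X]) := by
        rw [← C_pow, ← C_pow, ← C_mul, ← pow_add]
        congr 2
        omega
      simp only [hq]
      rw [key, mul_pow, mul_right_comm, hCC]
    have hcoeff := congrArg (fun p => p.coeff (l : ℕ)) key2
    simp only [finset_sum_coeff, coeff_C_mul] at hcoeff
    calc ∑ k : Fin (d + 1), (binR3 (d + 1) ^ 2) i k * (binR3 (d + 1) ^ 2) k l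
        = ∑ k : Fin (d + 1), (q (i : ℕ)).coeff k * (q (k : ℕ)).coeff l :=
          Finset.sum_congr rfl fun k _ => by rw [sq_entry, sq_entry]
      _ = ∑ k ∈ Finset.range (d + 1), (q (i : ℕ)).coeff k * (q k).coeff l :=
          Fin.sum_univ_eq_sum_range (fun k => (q (i : ℕ)).coeff k * (q k).coeff l) (d + 1)
      _ = (2 : ZMod 3) ^ d * (X ^ (i : ℕ) : (ZMod 3)[X]).coeff l := hcoeff
  -- Finish
  ext i l
  rw [four_entry i l, coeff_X_pow]
  rw [Matrix.smul_apply, Matrix.one_apply, smul_eq_mul]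
  have hsign : ((-1 : ZMod 3)) ^ (d + 1 + 1) = (2 : ZMod 3) ^ d := by
    have h2 : (-1 : ZMod 3) = 2 := by decide
    have h4 : (2 : ZMod 3) ^ 2 = 1 := by decide
    rw [h2, show d + 1 + 1 = d + 2 by omega, pow_add, h4, mul_one]
  rw [hsign]
  by_cases h : i = l
  · subst h; simp
  · have h' : (l : ℕ) ≠ (i : ℕ) := fun hc => h (Fin.ext hc.symm)
    simp [h, h']
end

section
/- For every integer k ≥ 1, the characteristic polynomial det(x·I - R_{4k}) of the 4k×4k matrix R_{4k} over the field ℤ/3ℤ equals (x^4 + 1)^k = (x^2 - x - 1)^k (x^2 + x - 1)^k. -/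
/-!
Row `i` of `R_n` is the coefficient vector of `(1 + X) ^ i * X ^ (n - 1 - i)`, so `R_n` is the
matrix of the substitution `(x, y) ↦ (x + y, x)` on binary forms of degree `n - 1`, i.e. of
`Sym^(n-1)` of the Fibonacci matrix `!![1, 1; 1, 0]`. If `r ^ 2 = r + 1` and `s = 1 - r ≠ r`,
the forms `(x - r y) ^ m (x - s y) ^ (n - 1 - m)` are eigenvectors with eigenvalues
`s ^ m r ^ (n - 1 - m)`, and their coefficient matrix is inverted, up to the scalar
`(s - r) ^ (n - 1)`, by the substitution `(x, y) ↦ (s x - r y, x - y)`. Over `𝔽₃(r) = 𝔽₉` we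
have `s = r ^ 3` and `r ^ 4 = -1`, so the eigenvalues are `r ^ (n - 1) (r ^ 2) ^ m`; since `r ^ 2`
is a primitive fourth root of unity, each run of four consecutive ones contributes
`x ^ 4 - r ^ (4 (n - 1)) = x ^ 4 + 1` to the characteristic polynomial.
-/

open Polynomial

section Homogenize

variable {R : Type*} [CommRing R]

lemma natDegree_X_sub_C_pow_le (c : R) (m : ℕ) : ((X - C c) ^ m).natDegree ≤ m := by
  simpa using natDegree_pow_le_of_le m (natDegree_X_sub_C_le c)

lemma aeval_homogenize (p : R[X]) (N : ℕ) (a b : R[X]) :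
    MvPolynomial.aeval ![a, b] (p.homogenize N) =
      ∑ l ∈ Finset.range (N + 1), C (p.coeff l) * (a ^ l * b ^ (N - l)) := by
  simp [homogenize, Finset.Nat.sum_antidiagonal_eq_sum_range_succ_mk,
    MvPolynomial.aeval_monomial, Finsupp.prod_fintype]

lemma aeval_homogenize_X_sub_C_pow (c : R) (m : ℕ) (q₁ q₂ : R[X]) :
    MvPolynomial.aeval ![q₁, q₂] (((X - C c) ^ m).homogenize m) = (q₁ - C c * q₂) ^ m := by
  induction m with
  | zero => simp
  | succ m ih =>
    rw [pow_succ, homogenize_mul _ _ (natDegree_X_sub_C_pow_le c m) (natDegree_X_sub_C_le c),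
      map_mul, ih, pow_succ]
    simp [homogenize_X]

lemma aeval_homogenize_X_sub_C_pow_mul (a b : R) (m e : ℕ) (q₁ q₂ : R[X]) :
    MvPolynomial.aeval ![q₁, q₂] (((X - C a) ^ m * (X - C b) ^ e).homogenize (m + e)) =
      (q₁ - C a * q₂) ^ m * (q₁ - C b * q₂) ^ e := by
  rw [homogenize_mul _ _ (natDegree_X_sub_C_pow_le a m) (natDegree_X_sub_C_pow_le b e), map_mul,
    aeval_homogenize_X_sub_C_pow, aeval_homogenize_X_sub_C_pow]

end Homogenize

section CoeffMatrix

variable {R : Type*} [CommRing R] {n : ℕ}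

def coeffMatrix (f : Fin n → R[X]) : Matrix (Fin n) (Fin n) R :=
  Matrix.of fun i j => (f i).coeff j

lemma coeffMatrix_C_mul (d : Fin n → R) (f : Fin n → R[X]) :
    coeffMatrix (fun i => C (d i) * f i) = Matrix.diagonal d * coeffMatrix f := by
  ext i j
  simp [coeffMatrix]

lemma coeffMatrix_X_pow : coeffMatrix (fun i : Fin n => (X : R[X]) ^ (i : ℕ)) = 1 := by
  ext i j
  simp [coeffMatrix, coeff_X_pow, Matrix.one_apply, Fin.ext_iff, eq_comm]

lemma coeffMatrix_mul_coeffMatrix_pow_mul_pow (f : Fin n → R[X]) (q₁ q₂ : R[X]) :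
    coeffMatrix f * coeffMatrix (fun l : Fin n => q₁ ^ (l : ℕ) * q₂ ^ (n - 1 - l)) =
      coeffMatrix fun i => MvPolynomial.aeval ![q₁, q₂] ((f i).homogenize (n - 1)) := by
  ext i j
  obtain ⟨N, rfl⟩ : ∃ N, n = N + 1 := ⟨n - 1, by have := i.pos; omega⟩
  simp [coeffMatrix, Matrix.mul_apply, aeval_homogenize,
    Fin.sum_univ_eq_sum_range (fun l => (f i).coeff l * (q₁ ^ l * q₂ ^ (N - l)).coeff j)]

end CoeffMatrix

lemma Matrix.charpoly_eq_of_semiconjBy {ι R : Type*} [Fintype ι] [DecidableEq ι] [CommRing R]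
    {A D P : Matrix ι ι R} (hP : IsUnit P) (h : SemiconjBy P A D) :
    A.charpoly = D.charpoly := by
  obtain ⟨u, rfl⟩ := hP
  rw [← Matrix.charpoly_units_conj' u D, Matrix.mul_assoc, ← h.eq, ← Matrix.mul_assoc,
    ← Matrix.coe_units_inv, Units.inv_mul, Matrix.one_mul]

section Fibonacci

noncomputable def symFibMatrix (R : Type*) [CommRing R] (n : ℕ) : Matrix (Fin n) (Fin n) R :=
  coeffMatrix fun i : Fin n => (1 + X) ^ (i : ℕ) * X ^ (n - 1 - i)

variable {R : Type*} [CommRing R]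

lemma map_binR3 (φ : ZMod 3 →+* R) (n : ℕ) : (binR3 n).map φ = symFibMatrix R n := by
  ext i j
  simp only [Matrix.map_apply, binR3, map_natCast, symFibMatrix, coeffMatrix, Matrix.of_apply,
    coeff_mul_X_pow', add_comm (1 : R[X]), coeff_X_add_one_pow]
  split_ifs with h
  · rw [Nat.choose_symm_of_eq_add]
    omega
  · rw [Nat.choose_eq_zero_of_lt (by omega), Nat.cast_zero]

noncomputable def eigenMatrix (r s : R) (n : ℕ) : Matrix (Fin n) (Fin n) R :=
  coeffMatrix fun m : Fin n => (X - C r) ^ (m : ℕ) * (X - C s) ^ (n - 1 - m)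

lemma eigenMatrix_mul_symFibMatrix {r : R} (hr : r ^ 2 = r + 1) (n : ℕ) :
    SemiconjBy (eigenMatrix r (1 - r) n) (symFibMatrix R n)
      (Matrix.diagonal fun m : Fin n => (1 - r) ^ (m : ℕ) * r ^ (n - 1 - m)) := by
  rw [SemiconjBy, eigenMatrix, symFibMatrix, coeffMatrix_mul_coeffMatrix_pow_mul_pow,
    ← coeffMatrix_C_mul]
  congr 1
  funext m
  have hCr : (C r : R[X]) ^ 2 = C r + 1 := by rw [← C_pow, hr, C_add, C_1]
  have h₁ : 1 + X - C r * X = C (1 - r) * (X - C r) := by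
    rw [C_sub, C_1]
    linear_combination -hCr
  have h₂ : 1 + X - C (1 - r) * X = C r * (X - C (1 - r)) := by
    rw [C_sub, C_1]
    linear_combination -hCr
  set e := n - 1 - (m : ℕ)
  rw [show n - 1 = m + e by omega, aeval_homogenize_X_sub_C_pow_mul, h₁, h₂, mul_pow, mul_pow,
    C_mul, C_pow, C_pow]
  ring

lemma eigenMatrix_mul_coeffMatrix (r s : R) (n : ℕ) :
    eigenMatrix r s n *
        coeffMatrix (fun l : Fin n => (C s * X - C r) ^ (l : ℕ) * (X - 1) ^ (n - 1 - l)) =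
      (s - r) ^ (n - 1) • (1 : Matrix (Fin n) (Fin n) R) := by
  rw [eigenMatrix, coeffMatrix_mul_coeffMatrix_pow_mul_pow, Matrix.smul_one_eq_diagonal,
    ← Matrix.mul_one (Matrix.diagonal _), ← coeffMatrix_X_pow, ← coeffMatrix_C_mul]
  congr 1
  funext m
  set e := n - 1 - (m : ℕ)
  rw [show n - 1 = m + e by omega, aeval_homogenize_X_sub_C_pow_mul, pow_add, C_mul, C_pow, C_pow]
  have h₁ : C s * X - C r - C r * (X - 1) = C (s - r) * X := by rw [C_sub]; ring
  have h₂ : C s * X - C r - C s * (X - 1) = C (s - r) := by rw [C_sub]; ring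
  rw [h₁, h₂, mul_pow]
  ring

lemma isUnit_eigenMatrix {K : Type*} [Field K] {r s : K} (h : s ≠ r) (n : ℕ) :
    IsUnit (eigenMatrix r s n) := by
  refine IsUnit.of_mul_eq_one (((s - r) ^ (n - 1))⁻¹ • coeffMatrix
    (fun l : Fin n => (C s * X - C r) ^ (l : ℕ) * (X - 1) ^ (n - 1 - l))) ?_
  rw [Matrix.mul_smul, eigenMatrix_mul_coeffMatrix, smul_smul,
    inv_mul_cancel₀ (pow_ne_zero _ (sub_ne_zero.mpr h)), one_smul]

theorem charpoly_symFibMatrix {K : Type*} [Field K] {r : K} (hr : r ^ 2 = r + 1)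
    (hr' : 1 - r ≠ r) (n : ℕ) :
    (symFibMatrix K n).charpoly =
      ∏ m : Fin n, (X - C ((1 - r) ^ (m : ℕ) * r ^ (n - 1 - m))) := by
  rw [Matrix.charpoly_eq_of_semiconjBy (isUnit_eigenMatrix hr' n)
    (eigenMatrix_mul_symFibMatrix hr n), Matrix.charpoly_diagonal]

end Fibonacci

lemma prod_range_four_mul_X_sub_C_mul_pow {R : Type*} [CommRing R] {t : R} (ht : t ^ 2 = -1)
    (c : R) (k : ℕ) :
    ∏ m ∈ Finset.range (4 * k), (X - C (c * t ^ m)) = (X ^ 4 - C (c ^ 4)) ^ k := by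
  induction k with
  | zero => simp
  | succ k ih =>
    have ht4 : t ^ (4 * k) = 1 := by rw [pow_mul, show t ^ 4 = (t ^ 2) ^ 2 by ring, ht]; simp
    have hCt : (C t : R[X]) ^ 2 = -1 := by rw [← C_pow, ht, C_neg, C_1]
    rw [mul_add_one, Finset.prod_range_add, ih, pow_succ _ k]
    congr 1
    simp only [pow_add, ht4, one_mul, Finset.prod_range_succ, Finset.prod_range_zero, C_mul,
      C_pow]
    rw [show (C t : R[X]) ^ 3 = -C t by linear_combination C t * hCt, hCt]
    linear_combination (C c ^ 4 - C c ^ 2 * X ^ 2) * hCt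

theorem charpoly_symFibMatrix_four_mul {K : Type*} [Field K] [CharP K 3] {r : K}
    (hr : r ^ 2 = r + 1) (k : ℕ) :
    (symFibMatrix K (4 * k)).charpoly = (X ^ 4 + 1) ^ k := by
  have h3 : (3 : K) = 0 := by exact_mod_cast CharP.cast_eq_zero K 3
  have hr3 : 1 - r = r ^ 3 := by linear_combination (-(r + 1)) * hr - r * h3
  have hr4 : r ^ 4 = -1 := by linear_combination (r ^ 2 + r + 2) * hr + (r + 1) * h3
  have hr' : 1 - r ≠ r := by
    intro h
    have hr1 : r = -1 := by linear_combination h + r * h3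
    rw [hr1] at hr
    norm_num at hr
  have heig (m : Fin (4 * k)) :
      (1 - r) ^ (m : ℕ) * r ^ (4 * k - 1 - m) = r ^ (4 * k - 1) * (r ^ 2) ^ (m : ℕ) := by
    rw [hr3, ← pow_mul, ← pow_mul, ← pow_add, ← pow_add]
    congr 1
    omega
  simp only [charpoly_symFibMatrix hr hr', heig]
  rw [Fin.prod_univ_eq_prod_range (fun m => X - C (r ^ (4 * k - 1) * (r ^ 2) ^ m)),
    prod_range_four_mul_X_sub_C_mul_pow (by rw [← pow_mul, hr4])]
  rcases k with _ | k
  · simp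
  · rw [← pow_mul, show (4 * (k + 1) - 1) * 4 = 4 * (4 * k + 3) by omega, pow_mul, hr4,
      (show Odd (4 * k + 3) from ⟨2 * k + 1, by ring⟩).neg_one_pow, C_neg, C_1, sub_neg_eq_add]

lemma irreducible_X_sq_sub_X_sub_one : Irreducible (X ^ 2 - X - 1 : (ZMod 3)[X]) := by
  refine irreducible_of_degree_le_three_of_not_isRoot ?_ ?_
  · rw [show (X ^ 2 - X - 1 : (ZMod 3)[X]).natDegree = 2 by compute_degree!]
    decide
  · simp only [IsRoot.def, eval_sub, eval_pow, eval_X, eval_one]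
    decide

lemma X_pow_four_add_one_eq_mul :
    (X ^ 4 + 1 : (ZMod 3)[X]) = (X ^ 2 - X - 1) * (X ^ 2 + X - 1) := by
  have h3 : (3 : (ZMod 3)[X]) = 0 := by exact_mod_cast CharP.cast_eq_zero (ZMod 3)[X] 3
  linear_combination X ^ 2 * h3

theorem stmt_6_general (k : ℕ) :
    (binR3 (4 * k)).charpoly = (X ^ 4 + 1 : (ZMod 3)[X]) ^ k ∧
      ((X ^ 4 + 1 : (ZMod 3)[X]) ^ k =
        (X ^ 2 - X - 1) ^ k * (X ^ 2 + X - 1) ^ k) := by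
  refine ⟨?_, by rw [← mul_pow, X_pow_four_add_one_eq_mul]⟩
  set q : (ZMod 3)[X] := X ^ 2 - X - 1
  have := Fact.mk irreducible_X_sq_sub_X_sub_one
  have := charP_of_injective_algebraMap (algebraMap (ZMod 3) (AdjoinRoot q)).injective 3
  have hroot : AdjoinRoot.root q ^ 2 = AdjoinRoot.root q + 1 := by
    have h := AdjoinRoot.eval₂_root q
    simp only [q, eval₂_sub, eval₂_pow, eval₂_X, eval₂_one] at h
    linear_combination h
  apply map_injective _ (algebraMap (ZMod 3) (AdjoinRoot q)).injective
  rw [← Matrix.charpoly_map, map_binR3, charpoly_symFibMatrix_four_mul hroot]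
  simp

theorem stmt_6 (k : ℕ) (hk : 1 ≤ k) :
    (binR3 (4 * k)).charpoly = (X ^ 4 + 1 : (ZMod 3)[X]) ^ k ∧
      ((X ^ 4 + 1 : (ZMod 3)[X]) ^ k =
        (X ^ 2 - X - 1) ^ k * (X ^ 2 + X - 1) ^ k) :=
  stmt_6_general k
end

section
/- For every integer k ≥ 0, the characteristic polynomial det(x·I - R_{4k+1}) of the (4k+1)×(4k+1) matrix R_{4k+1} over the field ℤ/3ℤ equals (x^4 - 1)^k (x - 1) if k is even, and (x^4 - 1)^k (x + 1) if k is odd. -/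
open Polynomial

namespace BinR3Aux

open Finset

noncomputable section

variable {K : Type} [CommRing K]

/-- basis monomial `X₀^m X₁^(d-m)` of binary forms of degree `d`. -/
def Bm (K : Type) [CommRing K] (d m : ℕ) : MvPolynomial (Fin 2) K :=
  MvPolynomial.X 0 ^ m * MvPolynomial.X 1 ^ (d - m)

/-- exponent vector of `X₀^i X₁^(d-i)`. -/
def nu (d i : ℕ) : Fin 2 →₀ ℕ := Finsupp.single 0 i + Finsupp.single 1 (d - i)

/-- the linear forms given by the rows of `A`. -/
def lf (A : Matrix (Fin 2) (Fin 2) K) (t : Fin 2) : MvPolynomial (Fin 2) K :=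
  MvPolynomial.C (A t 0) * MvPolynomial.X 0 + MvPolynomial.C (A t 1) * MvPolynomial.X 1

/-- the matrix of the substitution action of `A` on binary forms of degree `d`. -/
def Smat (d : ℕ) (A : Matrix (Fin 2) (Fin 2) K) : Matrix (Fin (d+1)) (Fin (d+1)) K :=
  fun i j => MvPolynomial.coeff (nu d (i : ℕ)) (MvPolynomial.aeval (lf A) (Bm K d (j : ℕ)))

lemma Bm_eq_monomial (d m : ℕ) :
    Bm K d m = MvPolynomial.monomial (nu d m) 1 := by
  rw [Bm, MvPolynomial.X_pow_eq_monomial, MvPolynomial.X_pow_eq_monomial,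
    MvPolynomial.monomial_mul, one_mul]
  rfl

lemma nu_eq_iff {d a b i : ℕ} (hab : a + b = d) (hi : i ≤ d) :
    Finsupp.single (0 : Fin 2) a + Finsupp.single 1 b = nu d i ↔ a = i ∧ b = d - i := by
  constructor
  · intro h
    have h0 := congrArg (fun f => f 0) h
    have h1 := congrArg (fun f => f 1) h
    simp [nu, Finsupp.single_apply] at h0 h1
    exact ⟨h0, h1⟩
  · rintro ⟨rfl, rfl⟩
    rfl

lemma coeff_nu_X_pow (d i a b : ℕ) (hab : a + b = d) (hi : i ≤ d) :
    MvPolynomial.coeff (nu d i)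
      (MvPolynomial.X 0 ^ a * MvPolynomial.X 1 ^ b : MvPolynomial (Fin 2) K) =
      if a = i ∧ b = d - i then 1 else 0 := by
  rw [MvPolynomial.X_pow_eq_monomial, MvPolynomial.X_pow_eq_monomial,
    MvPolynomial.monomial_mul, one_mul, MvPolynomial.coeff_monomial]
  exact if_congr (nu_eq_iff hab hi) rfl rfl

lemma coeff_nu_Bm (d i m : ℕ) (hi : i ≤ d) (hm : m ≤ d) :
    MvPolynomial.coeff (nu d i) (Bm K d m) = if m = i then 1 else 0 := by
  rw [Bm]
  rw [coeff_nu_X_pow d i m (d - m) (by omega) hi]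
  by_cases h : m = i
  · subst h; simp
  · rw [if_neg (by tauto), if_neg h]

/-- the span of the degree-`d` monomials. -/
def Wd (K : Type) [CommRing K] (d : ℕ) : Submodule K (MvPolynomial (Fin 2) K) :=
  Submodule.span K (Set.range fun m : Fin (d+1) => Bm K d (m : ℕ))

lemma lin_mul_mem (α β : K) (e : ℕ) {w : MvPolynomial (Fin 2) K} (hw : w ∈ Wd K e) :
    (MvPolynomial.C α * MvPolynomial.X 0 + MvPolynomial.C β * MvPolynomial.X 1) * w
      ∈ Wd K (e+1) := by
  induction hw using Submodule.span_induction with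
  | mem x hx =>
      obtain ⟨m, rfl⟩ := hx
      have hm : (m : ℕ) ≤ e := m.is_le
      have key : (MvPolynomial.C α * MvPolynomial.X 0 + MvPolynomial.C β * MvPolynomial.X 1)
            * Bm K e (m : ℕ)
          = α • Bm K (e+1) ((m : ℕ)+1) + β • Bm K (e+1) (m : ℕ) := by
        have h1 : (e+1) - ((m : ℕ)+1) = e - (m : ℕ) := by omega
        have h2 : (e+1) - (m : ℕ) = (e - (m : ℕ)) + 1 := by omega
        rw [Bm, Bm, Bm, h1, h2, MvPolynomial.smul_eq_C_mul, MvPolynomial.smul_eq_C_mul]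
        ring
      rw [key]
      refine Submodule.add_mem _ (Submodule.smul_mem _ _ ?_) (Submodule.smul_mem _ _ ?_)
      · exact Submodule.subset_span ⟨⟨(m : ℕ)+1, by omega⟩, rfl⟩
      · exact Submodule.subset_span ⟨⟨(m : ℕ), by omega⟩, rfl⟩
  | zero => rw [mul_zero]; exact (Wd K (e+1)).zero_mem
  | add x y hx hy ihx ihy => rw [mul_add]; exact Submodule.add_mem _ ihx ihy
  | smul a x hx ihx => rw [mul_smul_comm]; exact Submodule.smul_mem _ _ ihx

lemma pow_lin_mem (α β γ δ : K) : ∀ j e : ℕ,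
    (MvPolynomial.C α * MvPolynomial.X 0 + MvPolynomial.C β * MvPolynomial.X 1) ^ j *
    (MvPolynomial.C γ * MvPolynomial.X 0 + MvPolynomial.C δ * MvPolynomial.X 1) ^ e
      ∈ Wd K (j + e) := by
  intro j
  induction j with
  | zero =>
      intro e
      induction e with
      | zero =>
          simp only [pow_zero, one_mul, Nat.add_zero]
          have : (1 : MvPolynomial (Fin 2) K) = Bm K 0 ((0 : Fin 1) : ℕ) := by simp [Bm]
          rw [this]
          exact Submodule.subset_span ⟨0, rfl⟩
      | succ e ih =>
          simp only [pow_zero, one_mul, Nat.zero_add] at ih ⊢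
          rw [pow_succ']
          exact lin_mul_mem γ δ e ih
  | succ j ihj =>
      intro e
      have h : j + 1 + e = (j + e) + 1 := by omega
      rw [h, pow_succ', mul_assoc]
      exact lin_mul_mem α β (j + e) (ihj e)

lemma repr_Wd {d : ℕ} {w : MvPolynomial (Fin 2) K} (hw : w ∈ Wd K d) :
    w = ∑ m : Fin (d+1), MvPolynomial.coeff (nu d (m : ℕ)) w • Bm K d (m : ℕ) := by
  induction hw using Submodule.span_induction with
  | mem x hx =>
      obtain ⟨m₀, rfl⟩ := hx
      have : ∀ m : Fin (d+1),
          MvPolynomial.coeff (nu d (m : ℕ)) (Bm K d (m₀ : ℕ)) • Bm K d (m : ℕ)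
          = if m₀ = m then Bm K d (m : ℕ) else 0 := by
        intro m
        rw [coeff_nu_Bm d (m : ℕ) (m₀ : ℕ) m.is_le m₀.is_le]
        by_cases h : (m₀ : ℕ) = (m : ℕ)
        · rw [if_pos h, if_pos (Fin.ext h), one_smul]
        · rw [if_neg h, if_neg (fun hc => h (congrArg _ hc)), zero_smul]
      rw [Finset.sum_congr rfl (fun m _ => this m)]
      simp
  | zero => simp
  | add x y hx hy ihx ihy =>
      rw [Finset.sum_congr rfl (fun m _ => by rw [MvPolynomial.coeff_add, add_smul])]
      rw [Finset.sum_add_distrib, ← ihx, ← ihy]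
  | smul a x hx ihx =>
      rw [Finset.sum_congr rfl (fun m _ => by
        rw [MvPolynomial.coeff_smul, smul_eq_mul, mul_smul])]
      rw [← Finset.smul_sum, ← ihx]

lemma aeval_lf (A B : Matrix (Fin 2) (Fin 2) K) (t : Fin 2) :
    MvPolynomial.aeval (lf A) (lf B t) = lf (B * A) t := by
  simp only [lf, map_add, _root_.map_mul, MvPolynomial.aeval_X, MvPolynomial.aeval_C,
    MvPolynomial.algebraMap_eq, Matrix.mul_apply, Fin.sum_univ_two, _root_.map_mul]
  ring

lemma aeval_Bm (A : Matrix (Fin 2) (Fin 2) K) (d j : ℕ) :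
    MvPolynomial.aeval (lf A) (Bm K d j) = (lf A 0) ^ j * (lf A 1) ^ (d - j) := by
  simp [Bm, _root_.map_mul, map_pow, MvPolynomial.aeval_X]

lemma aeval_Bm_mem (A : Matrix (Fin 2) (Fin 2) K) (d : ℕ) (j : ℕ) (hj : j ≤ d) :
    MvPolynomial.aeval (lf A) (Bm K d j) ∈ Wd K d := by
  rw [aeval_Bm]
  have h := pow_lin_mem (A 0 0) (A 0 1) (A 1 0) (A 1 1) j (d - j)
  have hd : j + (d - j) = d := by omega
  rw [hd] at h
  exact h

lemma Smat_mul (d : ℕ) (A B : Matrix (Fin 2) (Fin 2) K) :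
    Smat d A * Smat d B = Smat d (B * A) := by
  ext i j
  rw [Matrix.mul_apply]
  have hq : MvPolynomial.aeval (lf B) (Bm K d (j : ℕ)) ∈ Wd K d :=
    aeval_Bm_mem B d (j : ℕ) j.is_le
  have hrep := repr_Wd hq
  have lhs_eq : ∑ m, Smat d A i m * Smat d B m j
      = MvPolynomial.coeff (nu d (i : ℕ))
          (MvPolynomial.aeval (lf A) (MvPolynomial.aeval (lf B) (Bm K d (j : ℕ)))) := by
    conv_rhs => rw [hrep]
    rw [map_sum]
    rw [MvPolynomial.coeff_sum]
    refine Finset.sum_congr rfl (fun m _ => ?_)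
    rw [_root_.map_smul, MvPolynomial.coeff_smul, smul_eq_mul]
    simp only [Smat]
    ring
  rw [lhs_eq]
  have comp_eq : MvPolynomial.aeval (lf A) (MvPolynomial.aeval (lf B) (Bm K d (j : ℕ)))
      = MvPolynomial.aeval (lf (B * A)) (Bm K d (j : ℕ)) := by
    rw [aeval_Bm, aeval_Bm, _root_.map_mul, map_pow, map_pow, aeval_lf, aeval_lf]
  rw [comp_eq]
  rfl

lemma Smat_one (d : ℕ) : Smat d (1 : Matrix (Fin 2) (Fin 2) K) = 1 := by
  ext i j
  have h : MvPolynomial.aeval (lf (1 : Matrix (Fin 2) (Fin 2) K)) (Bm K d (j : ℕ))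
      = Bm K d (j : ℕ) := by
    rw [aeval_Bm]
    have h0 : lf (1 : Matrix (Fin 2) (Fin 2) K) 0 = MvPolynomial.X 0 := by
      simp [lf, Matrix.one_apply]
    have h1 : lf (1 : Matrix (Fin 2) (Fin 2) K) 1 = MvPolynomial.X 1 := by
      simp [lf, Matrix.one_apply]
    rw [h0, h1, Bm]
  rw [Smat, h, coeff_nu_Bm d (i : ℕ) (j : ℕ) i.is_le j.is_le, Matrix.one_apply]
  by_cases hij : i = j
  · subst hij; simp
  · rw [if_neg (fun hc : (j : ℕ) = (i : ℕ) => hij (Fin.ext hc.symm)), if_neg hij]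

-- charpoly generalities

lemma charpoly_conj {n : ℕ} (N N' A : Matrix (Fin n) (Fin n) K)
    (h1 : N * N' = 1) (h2 : N' * N = 1) :
    (N' * A * N).charpoly = A.charpoly := by
  classical
  have hmap1 : N'.map (Polynomial.C : K →+* K[X]) * N.map Polynomial.C = 1 := by
    rw [← Matrix.map_mul, h2, Matrix.map_one _ (map_zero _) (map_one _)]
  have hmap2 : N.map (Polynomial.C : K →+* K[X]) * N'.map Polynomial.C = 1 := by
    rw [← Matrix.map_mul, h1, Matrix.map_one _ (map_zero _) (map_one _)]
  have key : Matrix.charmatrix (N' * A * N)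
      = N'.map Polynomial.C * Matrix.charmatrix A * N.map Polynomial.C := by
    unfold Matrix.charmatrix
    have hscal : ∀ B : Matrix (Fin n) (Fin n) K[X],
        (Matrix.scalar (Fin n)) (Polynomial.X : K[X]) * B
          = B * (Matrix.scalar (Fin n)) Polynomial.X := by
      intro B
      exact (Matrix.scalar_commute (Polynomial.X : K[X]) (fun r' => Commute.all _ _) B).eq
    have hmapmul : (Polynomial.C : K →+* K[X]).mapMatrix (N' * A * N)
        = N'.map Polynomial.C * ((Polynomial.C : K →+* K[X]).mapMatrix A) * N.map Polynomial.C := by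
      simp only [RingHom.mapMatrix_apply, Matrix.map_mul]
    rw [hmapmul, mul_sub, sub_mul]
    congr 1
    rw [← hscal, mul_assoc, hmap1, mul_one]
  rw [Matrix.charpoly, Matrix.charpoly, key, Matrix.det_mul, Matrix.det_mul]
  have hd : (N'.map Polynomial.C).det * (N.map Polynomial.C).det = 1 := by
    rw [← Matrix.det_mul, hmap1, Matrix.det_one]
  calc (N'.map Polynomial.C).det * (Matrix.charmatrix A).det * (N.map Polynomial.C).det
      = ((N'.map Polynomial.C).det * (N.map Polynomial.C).det)
        * (Matrix.charmatrix A).det := by ring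
    _ = (Matrix.charmatrix A).det := by rw [hd, one_mul]

lemma charpoly_transpose {n : ℕ} (A : Matrix (Fin n) (Fin n) K) :
    A.transpose.charpoly = A.charpoly := by
  classical
  rw [Matrix.charpoly, Matrix.charpoly, ← Matrix.det_transpose (Matrix.charmatrix A.transpose)]
  congr 1
  ext i j
  by_cases h : i = j
  · subst h
    rw [Matrix.transpose_apply, Matrix.charmatrix_apply_eq, Matrix.charmatrix_apply_eq,
      Matrix.transpose_apply]
  · rw [Matrix.transpose_apply, Matrix.charmatrix_apply_ne _ _ _ (Ne.symm h),
      Matrix.charmatrix_apply_ne _ _ _ h, Matrix.transpose_apply]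

lemma charpoly_diagonal {n : ℕ} (g : Fin n → K) :
    (Matrix.diagonal g).charpoly = ∏ i : Fin n, ((X : K[X]) - Polynomial.C (g i)) := by
  classical
  have h : Matrix.charmatrix (Matrix.diagonal g)
      = Matrix.diagonal (fun i => (X : K[X]) - Polynomial.C (g i)) := by
    ext i j
    by_cases hij : i = j
    · subst hij
      rw [Matrix.charmatrix_apply_eq, Matrix.diagonal_apply_eq, Matrix.diagonal_apply_eq]
    · rw [Matrix.charmatrix_apply_ne _ _ _ hij, Matrix.diagonal_apply_ne _ hij,
        Matrix.diagonal_apply_ne _ hij, map_zero, neg_zero]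
  rw [Matrix.charpoly, h, Matrix.det_diagonal]

-- entries of the two special matrices

lemma Smat_special (d : ℕ) (i j : Fin (d+1)) :
    Smat d (Matrix.of ![![1, 1], ![1, 0]] : Matrix (Fin 2) (Fin 2) K) i j
      = ((j : ℕ).choose (d - (i : ℕ)) : K) := by
  have hi : (i : ℕ) ≤ d := i.is_le
  have hj : (j : ℕ) ≤ d := j.is_le
  have h0 : lf (Matrix.of ![![1, 1], ![1, 0]] : Matrix (Fin 2) (Fin 2) K) 0
      = MvPolynomial.X 0 + MvPolynomial.X 1 := by
    simp [lf]
  have h1 : lf (Matrix.of ![![1, 1], ![1, 0]] : Matrix (Fin 2) (Fin 2) K) 1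
      = MvPolynomial.X 0 := by
    simp [lf]
  rw [Smat, aeval_Bm, h0, h1, add_pow, Finset.sum_mul, MvPolynomial.coeff_sum]
  have hterm : ∀ s ∈ Finset.range ((j : ℕ)+1),
      MvPolynomial.coeff (nu d (i : ℕ))
        (MvPolynomial.X 0 ^ s * MvPolynomial.X 1 ^ ((j : ℕ) - s)
          * ((j : ℕ).choose s : MvPolynomial (Fin 2) K)
          * MvPolynomial.X 0 ^ (d - (j : ℕ)))
      = ((j : ℕ).choose s : K) *
          (if s + (d - (j : ℕ)) = (i : ℕ) ∧ (j : ℕ) - s = d - (i : ℕ) then 1 else 0) := by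
    intro s hs
    have hs' : s ≤ (j : ℕ) := by
      simp only [Finset.mem_range] at hs; omega
    have hre : MvPolynomial.X 0 ^ s * MvPolynomial.X 1 ^ ((j : ℕ) - s)
          * ((j : ℕ).choose s : MvPolynomial (Fin 2) K)
          * MvPolynomial.X 0 ^ (d - (j : ℕ))
        = MvPolynomial.C (((j : ℕ).choose s : K)) *
          (MvPolynomial.X 0 ^ (s + (d - (j : ℕ))) * MvPolynomial.X 1 ^ ((j : ℕ) - s)) := by
      have hnc : ((j : ℕ).choose s : MvPolynomial (Fin 2) K)
          = MvPolynomial.C (((j : ℕ).choose s : K)) :=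
        (map_natCast (MvPolynomial.C : K →+* MvPolynomial (Fin 2) K) _).symm
      rw [hnc, pow_add]
      ring
    rw [hre, MvPolynomial.coeff_C_mul,
      coeff_nu_X_pow d (i : ℕ) (s + (d - (j : ℕ))) ((j : ℕ) - s) (by omega) hi]
  rw [Finset.sum_congr rfl hterm]
  by_cases hc : d ≤ (i : ℕ) + (j : ℕ)
  · set s0 : ℕ := (i : ℕ) + (j : ℕ) - d with hs0
    have hs0mem : s0 ∈ Finset.range ((j : ℕ)+1) := by
      simp only [Finset.mem_range]; omega
    rw [Finset.sum_eq_single_of_mem s0 hs0mem]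
    · rw [if_pos (by constructor <;> omega), mul_one]
      have hchoose : (j : ℕ).choose s0 = (j : ℕ).choose (d - (i : ℕ)) := by
        rw [show s0 = (j : ℕ) - (d - (i : ℕ)) by omega]
        exact Nat.choose_symm (by omega)
      rw [hchoose]
    · intro s hsmem hsne
      rw [if_neg, mul_zero]
      rintro ⟨hc1, hc2⟩
      exact hsne (by omega)
  · have : (j : ℕ).choose (d - (i : ℕ)) = 0 :=
      Nat.choose_eq_zero_of_lt (by omega)
    rw [this, Nat.cast_zero]
    refine Finset.sum_eq_zero (fun s hsmem => ?_)
    simp only [Finset.mem_range] at hsmem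
    rw [if_neg, mul_zero]
    rintro ⟨hc1, hc2⟩
    omega

lemma Smat_diag (d : ℕ) (lam mu : K) :
    Smat d (Matrix.of ![![lam, 0], ![0, mu]] : Matrix (Fin 2) (Fin 2) K)
      = Matrix.diagonal (fun m : Fin (d+1) => lam ^ (m : ℕ) * mu ^ (d - (m : ℕ))) := by
  ext i j
  have hi : (i : ℕ) ≤ d := i.is_le
  have hj : (j : ℕ) ≤ d := j.is_le
  have h0 : lf (Matrix.of ![![lam, 0], ![0, mu]] : Matrix (Fin 2) (Fin 2) K) 0
      = MvPolynomial.C lam * MvPolynomial.X 0 := by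
    simp [lf]
  have h1 : lf (Matrix.of ![![lam, 0], ![0, mu]] : Matrix (Fin 2) (Fin 2) K) 1
      = MvPolynomial.C mu * MvPolynomial.X 1 := by
    simp [lf]
  rw [Smat, aeval_Bm, h0, h1, mul_pow, mul_pow, ← map_pow, ← map_pow,
    mul_mul_mul_comm, ← _root_.map_mul, MvPolynomial.coeff_C_mul,
    coeff_nu_X_pow d (i : ℕ) (j : ℕ) (d - (j : ℕ)) (by omega) hi]
  by_cases hij : i = j
  · subst hij
    rw [if_pos ⟨rfl, rfl⟩, mul_one, Matrix.diagonal_apply_eq]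
  · rw [if_neg, mul_zero, Matrix.diagonal_apply_ne _ hij]
    rintro ⟨hc1, hc2⟩
    exact hij (Fin.ext hc1.symm)

-- the product computation

lemma prod_four {K : Type} [CommRing K] (u v : K[X])
    (hu : u ^ 4 = 1) (hv : v ^ 2 = -1) (x : K[X]) :
    (x - u) * (x - u * v) * (x + u) * (x + u * v) = x ^ 4 - 1 := by
  linear_combination (1 - u^2 * x^2) * hv + v^2 * hu

lemma prod_four_consec {K : Type} [CommRing K] (z : K) (hz : z ^ 2 = -1) (b : ℕ) :
    ∏ r ∈ Finset.range 4, ((X : K[X]) - Polynomial.C (z ^ (b + r)))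
      = X ^ 4 - 1 := by
  have e2 : z ^ (b + 2) = -(z ^ b) := by
    rw [pow_add, hz]; ring
  have h3 : z ^ 3 = -z := by linear_combination z * hz
  have e3 : z ^ (b + 3) = -(z ^ b * z) := by
    rw [pow_add, h3]; ring
  have e1 : z ^ (b + 1) = z ^ b * z := by rw [pow_add, pow_one]
  have hu : (Polynomial.C (z ^ b) : K[X]) ^ 4 = 1 := by
    rw [← map_pow]
    have : (z ^ b) ^ 4 = 1 := by
      have h4 : z ^ 4 = 1 := by
        have : z ^ 4 = (z ^ 2) ^ 2 := by ring
        rw [this, hz]; ring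
      calc (z ^ b) ^ 4 = (z ^ 4) ^ b := pow_right_comm z b 4
        _ = 1 := by rw [h4, one_pow]
    rw [this, _root_.map_one]
  have hv : (Polynomial.C z : K[X]) ^ 2 = -1 := by
    rw [← map_pow, hz, map_neg, _root_.map_one]
  rw [Finset.prod_range_succ, Finset.prod_range_succ, Finset.prod_range_succ,
    Finset.prod_range_one]
  rw [Nat.add_zero, e1, e2, e3, map_neg, _root_.map_mul, map_neg, _root_.map_mul]
  have := prod_four (Polynomial.C (z ^ b)) (Polynomial.C z) hu hv (X : K[X])
  calc ((X : K[X]) - Polynomial.C (z ^ b)) * (X - Polynomial.C (z ^ b) * Polynomial.C z)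
        * (X - -Polynomial.C (z ^ b)) * (X - -(Polynomial.C (z ^ b) * Polynomial.C z))
      = ((X : K[X]) - Polynomial.C (z ^ b)) * (X - Polynomial.C (z ^ b) * Polynomial.C z)
        * (X + Polynomial.C (z ^ b)) * (X + Polynomial.C (z ^ b) * Polynomial.C z) := by ring
    _ = X ^ 4 - 1 := this

lemma prod_main {K : Type} [CommRing K] (z : K) (hz : z ^ 2 = -1) (k a : ℕ) :
    ∏ j ∈ Finset.range (4 * k + 1), ((X : K[X]) - Polynomial.C (z ^ (a + j)))
      = ((X : K[X]) ^ 4 - 1) ^ k * (X - Polynomial.C (z ^ a)) := by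
  induction k with
  | zero => simp
  | succ n ih =>
      have h : 4 * (n + 1) + 1 = (4 * n + 1) + 4 := by omega
      rw [h, Finset.prod_range_add, ih]
      have : ∏ x ∈ Finset.range 4, ((X : K[X]) - Polynomial.C (z ^ (a + (4 * n + 1 + x))))
          = X ^ 4 - 1 := by
        have hre : ∀ x, a + (4 * n + 1 + x) = (a + (4 * n + 1)) + x := by omega
        rw [Finset.prod_congr rfl (fun x _ => by rw [hre x])]
        exact prod_four_consec z hz (a + (4 * n + 1))
      rw [this]
      ring


-- the concrete field F₉ = F₃[i]

abbrev KK : Type := AdjoinRoot ((X : (ZMod 3)[X]) ^ 2 + 1)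

instance : Nontrivial KK := by
  refine AdjoinRoot.nontrivial _ ?_
  rw [← Polynomial.C_1, Polynomial.degree_X_pow_add_C (by norm_num : 0 < 2)]
  norm_num

end

end BinR3Aux

open BinR3Aux in
theorem stmt_7 (k : ℕ) :
    (binR3 (4 * k + 1)).charpoly =
      if Even k then ((X ^ 4 - 1 : (ZMod 3)[X]) ^ k * (X - 1))
      else ((X ^ 4 - 1 : (ZMod 3)[X]) ^ k * (X + 1)) := by
  classical
  set f : ZMod 3 →+* KK := algebraMap (ZMod 3) KK with hf
  -- basic facts about KK
  set r : KK := AdjoinRoot.root _ with hrdef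
  have h2 : r ^ 2 = -1 := by
    have h := AdjoinRoot.eval₂_root ((X : (ZMod 3)[X]) ^ 2 + 1)
    simp only [Polynomial.eval₂_add, Polynomial.eval₂_pow, Polynomial.eval₂_X,
      Polynomial.eval₂_one] at h
    linear_combination h
  have h3 : (3 : KK) = 0 := by
    have hof : f (3 : ZMod 3) = (3 : KK) := map_ofNat f 3
    rw [← hof, show (3 : ZMod 3) = 0 by decide, map_zero]
  set lamK : KK := -(1 + r) with hlam
  set muK : KK := r - 1 with hmu
  set zK : KK := -r with hzK
  have hzeta2 : zK ^ 2 = -1 := by rw [hzK]; linear_combination h2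
  have hlam2 : lamK ^ 2 = zK := by rw [hlam, hzK]; linear_combination h2 + r * h3
  have hmu3 : muK = lamK ^ 3 := by
    rw [hmu, hlam]; linear_combination (r + 3) * h2 + (r - 1) * h3
  set MK : Matrix (Fin 2) (Fin 2) KK := Matrix.of ![![1, 1], ![1, 0]] with hMK
  set DK : Matrix (Fin 2) (Fin 2) KK := Matrix.of ![![lamK, 0], ![0, muK]] with hDK
  set Q : Matrix (Fin 2) (Fin 2) KK := Matrix.of ![![lamK, muK], ![1, 1]] with hQ
  set Q' : Matrix (Fin 2) (Fin 2) KK :=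
    Matrix.of ![![-r, r * muK], ![r, -r * lamK]] with hQ'
  have hQQ' : Q * Q' = 1 := by
    ext i j
    fin_cases i <;> fin_cases j <;>
      simp [hQ, hQ', Matrix.mul_apply, Fin.sum_univ_two, Matrix.one_apply, hlam, hmu] <;>
      first
        | ring1
        | linear_combination 2 * h2 - h3
        | linear_combination -(2 * h2) + h3
        | linear_combination 4 * h2 - h3
        | linear_combination -(4 * h2) + h3
        | linear_combination (4 - 2 * r ^ 2) * h2 - h3
        | linear_combination -((4 - 2 * r ^ 2) * h2) + h3
  have hQ'Q : Q' * Q = 1 := by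
    ext i j
    fin_cases i <;> fin_cases j <;>
      simp [hQ, hQ', Matrix.mul_apply, Fin.sum_univ_two, Matrix.one_apply, hlam, hmu] <;>
      first
        | ring1
        | linear_combination 2 * h2 - h3
        | linear_combination -(2 * h2) + h3
        | linear_combination 4 * h2 - h3
        | linear_combination -(4 * h2) + h3
        | linear_combination (4 - 2 * r ^ 2) * h2 - h3
        | linear_combination -((4 - 2 * r ^ 2) * h2) + h3
  have hM : MK = Q * (DK * Q') := by
    ext i j
    fin_cases i <;> fin_cases j <;>
      simp [hMK, hQ, hQ', hDK, Matrix.mul_apply, Fin.sum_univ_two, hlam, hmu] <;>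
      first
        | ring1
        | linear_combination 2 * h2 - h3
        | linear_combination -(2 * h2) + h3
        | linear_combination 4 * h2 - h3
        | linear_combination -(4 * h2) + h3
        | linear_combination (4 - 2 * r ^ 2) * h2 - h3
        | linear_combination -((4 - 2 * r ^ 2) * h2) + h3
        | linear_combination (2 * r ^ 2 - 4) * h2 + h3
        | linear_combination (2 * r ^ 2 + 4) * h2 - h3
  -- relating binR3 to Smat
  have hBR : ((binR3 (4 * k + 1)).map f).transpose = Smat (4 * k) MK := by
    ext i j
    rw [Matrix.transpose_apply, Matrix.map_apply, Smat_special, binR3]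
    have hn : 4 * k + 1 - 1 - (i : ℕ) = 4 * k - (i : ℕ) := by omega
    rw [hn, map_natCast]
  -- conjugation
  have hSinv1 : Smat (4 * k) Q * Smat (4 * k) Q' = 1 := by
    rw [Smat_mul, hQ'Q, Smat_one]
  have hSinv2 : Smat (4 * k) Q' * Smat (4 * k) Q = 1 := by
    rw [Smat_mul, hQQ', Smat_one]
  have hSM : Smat (4 * k) MK = Smat (4 * k) Q' * Smat (4 * k) DK * Smat (4 * k) Q := by
    rw [hM, ← Smat_mul (4 * k) (DK * Q') Q, ← Smat_mul (4 * k) Q' DK]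
  have hcp1 : (Smat (4 * k) MK).charpoly = (Smat (4 * k) DK).charpoly := by
    rw [hSM]
    exact charpoly_conj (Smat (4 * k) Q) (Smat (4 * k) Q') (Smat (4 * k) DK) hSinv1 hSinv2
  -- charpoly of the diagonal part
  have hcp2 : (Smat (4 * k) DK).charpoly
      = ∏ m ∈ Finset.range (4 * k + 1),
          ((X : KK[X]) - Polynomial.C (lamK ^ m * muK ^ (4 * k - m))) := by
    rw [hDK, Smat_diag, charpoly_diagonal]
    exact Fin.prod_univ_eq_prod_range
      (fun m => (X : KK[X]) - Polynomial.C (lamK ^ m * muK ^ (4 * k - m))) (4 * k + 1)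
  have hcp3 : ∏ m ∈ Finset.range (4 * k + 1),
        ((X : KK[X]) - Polynomial.C (lamK ^ m * muK ^ (4 * k - m)))
      = ((X : KK[X]) ^ 4 - 1) ^ k * (X - Polynomial.C ((-1 : KK) ^ k)) := by
    have hstep : ∀ m ∈ Finset.range (4 * k + 1),
        ((X : KK[X]) - Polynomial.C (lamK ^ m * muK ^ (4 * k - m)))
          = (fun j => (X : KK[X]) - Polynomial.C (zK ^ (2 * k + j))) (4 * k + 1 - 1 - m) := by
      intro m hm
      simp only [Finset.mem_range] at hm
      have hval : lamK ^ m * muK ^ (4 * k - m) = zK ^ (2 * k + (4 * k + 1 - 1 - m)) := by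
        rw [hmu3, ← pow_mul, ← pow_add,
          show m + 3 * (4 * k - m) = 2 * (2 * k + (4 * k + 1 - 1 - m)) by omega,
          pow_mul, hlam2]
      rw [hval]
    rw [Finset.prod_congr rfl hstep,
      Finset.prod_range_reflect (fun j => (X : KK[X]) - Polynomial.C (zK ^ (2 * k + j)))
        (4 * k + 1),
      prod_main zK hzeta2 k (2 * k)]
    congr 2
    rw [pow_mul, hzeta2]
  -- put it together
  have main : (binR3 (4 * k + 1)).charpoly.map f
      = ((X : KK[X]) ^ 4 - 1) ^ k * (X - Polynomial.C ((-1 : KK) ^ k)) := by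
    rw [← Matrix.charpoly_map, ← charpoly_transpose ((binR3 (4 * k + 1)).map f), hBR,
      hcp1, hcp2, hcp3]
  have hinj : Function.Injective (Polynomial.map f) :=
    Polynomial.map_injective f (RingHom.injective f)
  by_cases hk : Even k
  · rw [if_pos hk]
    apply hinj
    rw [main, Even.neg_one_pow hk, Polynomial.map_mul, Polynomial.map_pow,
      Polynomial.map_sub, Polynomial.map_pow, Polynomial.map_one, Polynomial.map_X,
      Polynomial.map_sub, Polynomial.map_one, Polynomial.map_X, Polynomial.C_1]
  · rw [if_neg hk]
    apply hinj
    have hodd : Odd k := Nat.not_even_iff_odd.mp hk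
    rw [main, Odd.neg_one_pow hodd, Polynomial.map_mul, Polynomial.map_pow,
      Polynomial.map_sub, Polynomial.map_pow, Polynomial.map_one, Polynomial.map_X,
      Polynomial.map_add, Polynomial.map_one, Polynomial.map_X, map_neg, Polynomial.C_1]
    ring
end

section
/- For every integer k ≥ 0, the characteristic polynomial det(x·I - R_{4k+2}) of the (4k+2)×(4k+2) matrix R_{4k+2} over the field ℤ/3ℤ equals (x^4 + 1)^k (x^2 - x - 1) if k is even, and (x^4 + 1)^k (x^2 + x - 1) if k is odd. -/
/-!
Reversing the rows and columns of `R_{N+1}ᵀ` gives the matrix of `Sym^N F` for the Fibonacci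
matrix `F = !![0, 1; 1, 1]`, acting on binary forms of degree `N`; since `Sym^N` is multiplicative,
its characteristic polynomial only depends on the eigenvalues of `F`. Over `𝔽₉ = 𝔽₃[φ]`,
`φ² = φ + 1`, the matrix `F` is diagonalisable with eigenvalues `φ` and `1 - φ = φ³`, and `φ` is
a primitive 8th root of unity. Hence `Sym^N F` has eigenvalues `φ^(3j) φ^(N-j) = φ^(N+2j)`,
`0 ≤ j ≤ N`. For `N = 4k+1` these are the odd powers `φ^(4k+1), …, φ^(12k+3)`: every four
consecutive ones are the roots of `X⁴ + 1`, and the first two, `±φ` and `±φ³` with sign `(-1)^k`,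
give `X² ∓ X - 1`.
-/

open Polynomial

open Matrix Finset

namespace Polynomial

variable {R S : Type*} [CommRing R] [CommRing S] [Algebra R S]

lemma aeval_homogenize_eq_sum (q : R[X]) (N : ℕ) (y z : S) :
    MvPolynomial.aeval ![y, z] (q.homogenize N) =
      ∑ l ∈ range (N + 1), algebraMap R S (q.coeff l) * y ^ l * z ^ (N - l) := by
  simp [homogenize, Finset.Nat.sum_antidiagonal_eq_sum_range_succ_mk, MvPolynomial.aeval_monomial,
    Finsupp.prod_fintype, Fin.prod_univ_two, mul_assoc]

lemma homogenize_pow {p : R[X]} {d : ℕ} (hp : p.natDegree ≤ d) (j : ℕ) :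
    (p ^ j).homogenize (j * d) = p.homogenize d ^ j := by
  induction j with
  | zero => simp
  | succ j ih =>
    rw [pow_succ, add_mul, one_mul, homogenize_mul _ _ (natDegree_pow_le_of_le j hp) hp, ih,
      pow_succ]

lemma homogenize_pow_mul_pow {p q : R[X]} (hp : p.natDegree ≤ 1) (hq : q.natDegree ≤ 1)
    (i j : ℕ) : (p ^ i * q ^ j).homogenize (i + j) = p.homogenize 1 ^ i * q.homogenize 1 ^ j := by
  rw [← homogenize_pow hp, ← homogenize_pow hq, ← homogenize_mul _ _
    (natDegree_pow_le_of_le i hp) (natDegree_pow_le_of_le j hq), mul_one, mul_one]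

lemma prod_range_four_X_sub_C_mul_pow {i : S} (hi : i ^ 2 = -1) (μ : S) :
    ∏ r ∈ range 4, (X - C (μ * i ^ r)) = X ^ 4 - C (μ ^ 4) := by
  have h2 : μ * i ^ 2 = -μ := by rw [hi, mul_neg_one]
  have h3 : μ * i ^ 3 = -(μ * i) := by rw [pow_succ', mul_left_comm, h2, mul_neg, mul_comm]
  have hCi : C i ^ 2 = -1 := by rw [← C_pow, hi, C_neg, C_1]
  simp only [prod_range_succ, prod_range_zero, one_mul, pow_zero, mul_one, pow_one]
  rw [h2, h3]
  simp only [C_neg, C_mul, C_pow]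
  linear_combination (C μ ^ 4 - C μ ^ 2 * X ^ 2) * hCi

end Polynomial

namespace SymPow

variable {R : Type*} [CommRing R]

noncomputable def linForm (v : Fin 2 → R) : R[X] := C (v 0) * X + C (v 1)

lemma natDegree_linForm_le (v : Fin 2 → R) : (linForm v).natDegree ≤ 1 := by
  unfold linForm; compute_degree

lemma aeval_homogenize_linForm (A : Matrix (Fin 2) (Fin 2) R) (v : Fin 2 → R) :
    MvPolynomial.aeval ![linForm (Aᵀ 0), linForm (Aᵀ 1)] ((linForm v).homogenize 1) =
      linForm (A *ᵥ v) := by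
  simp only [linForm, homogenize_add, homogenize_C_mul, homogenize_X one_ne_zero, homogenize_C,
    map_add, map_mul, MvPolynomial.aeval_C, MvPolynomial.aeval_X, algebraMap_eq, mulVec,
    dotProduct, Fin.sum_univ_two, transpose_apply, cons_val_zero, cons_val_one, pow_zero, pow_one,
    mul_one, tsub_self]
  ring

noncomputable def column (N : ℕ) (A : Matrix (Fin 2) (Fin 2) R) (j : ℕ) : R[X] :=
  linForm (Aᵀ 0) ^ j * linForm (Aᵀ 1) ^ (N - j)

lemma aeval_homogenize_column (A B : Matrix (Fin 2) (Fin 2) R) {N j : ℕ} (hj : j ≤ N) :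
    MvPolynomial.aeval ![linForm (Aᵀ 0), linForm (Aᵀ 1)] ((column N B j).homogenize N) =
      column N (A * B) j := by
  obtain ⟨m, rfl⟩ := Nat.exists_eq_add_of_le hj
  simp only [column, Nat.add_sub_cancel_left]
  rw [homogenize_pow_mul_pow (natDegree_linForm_le _) (natDegree_linForm_le _)]
  simp only [map_mul, map_pow, aeval_homogenize_linForm]
  have hcol (k : Fin 2) : (A * B)ᵀ k = A *ᵥ Bᵀ k := by
    ext i; simp [mul_apply, mulVec, dotProduct]
  rw [hcol, hcol]

/-- The matrix of `Sym^N A` acting on binary forms of degree `N` in the basis `x ^ i * y ^ (N - i)`,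
with forms dehomogenised at `y = 1`: column `j` holds the coefficients of `ℓ₀ ^ j * ℓ₁ ^ (N - j)`,
where `ℓₖ = linForm (Aᵀ k)` is the image of `x` resp. `y`. -/
noncomputable def symPowMatrix (N : ℕ) (A : Matrix (Fin 2) (Fin 2) R) :
    Matrix (Fin (N + 1)) (Fin (N + 1)) R :=
  Matrix.of fun i j => (column N A j).coeff i

@[simp]
lemma symPowMatrix_apply (N : ℕ) (A : Matrix (Fin 2) (Fin 2) R) (i j : Fin (N + 1)) :
    symPowMatrix N A i j = (column N A j).coeff i :=
  rfl

lemma symPowMatrix_mul (N : ℕ) (A B : Matrix (Fin 2) (Fin 2) R) :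
    symPowMatrix N A * symPowMatrix N B = symPowMatrix N (A * B) := by
  ext i j
  rw [symPowMatrix_apply, ← aeval_homogenize_column A B (Nat.lt_succ_iff.mp j.2),
    aeval_homogenize_eq_sum, finsetSum_coeff, mul_apply, ← Fin.sum_univ_eq_sum_range
      (fun l => (algebraMap R R[X] ((column N B j).coeff l) * _ ^ l * _ ^ (N - l)).coeff i)]
  refine sum_congr rfl fun l _ => ?_
  rw [mul_assoc, algebraMap_eq, coeff_C_mul, mul_comm]
  rfl

lemma symPowMatrix_diagonal (N : ℕ) (d : Fin 2 → R) :
    symPowMatrix N (diagonal d) =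
      diagonal fun j : Fin (N + 1) => d 0 ^ (j : ℕ) * d 1 ^ (N - j) := by
  ext i j
  have hcol : column N (diagonal d) j = C (d 0 ^ (j : ℕ) * d 1 ^ (N - j)) * X ^ (j : ℕ) := by
    simp [column, linForm, mul_pow, mul_right_comm]
  rw [symPowMatrix_apply, hcol, coeff_C_mul_X_pow, diagonal_apply]
  by_cases h : i = j
  · simp [h]
  · simp [h, Fin.val_ne_iff.mpr h]

theorem charpoly_symPowMatrix_of_mul_eq {A P : Matrix (Fin 2) (Fin 2) R} {d : Fin 2 → R}
    (hP : IsUnit P) (h : A * P = P * diagonal d) (N : ℕ) :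
    (symPowMatrix N A).charpoly =
      ∏ j : Fin (N + 1), (X - C (d 0 ^ (j : ℕ) * d 1 ^ (N - j))) := by
  obtain ⟨u, rfl⟩ := hP
  have hA : A = u.val * diagonal d * u⁻¹.val := by rw [← h, mul_assoc, Units.mul_inv, mul_one]
  rw [hA, ← symPowMatrix_mul, ← symPowMatrix_mul, charpoly_mul_comm, ← mul_assoc,
    symPowMatrix_mul, symPowMatrix_mul, Units.inv_mul, one_mul,
    symPowMatrix_diagonal, charpoly_diagonal]

end SymPow

open SymPow

lemma binR3_map_eq {R : Type*} [CommRing R] (f : ZMod 3 →+* R) (N : ℕ) :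
    (binR3 (N + 1)).map f =
      (reindex Fin.revPerm Fin.revPerm (symPowMatrix N !![0, 1; 1, 1]))ᵀ := by
  ext i j
  have hcol : column N !![(0 : R), 1; 1, 1] (N - i) = (X + 1) ^ (i : ℕ) := by
    simp [column, linForm, Nat.sub_sub_self (Nat.lt_succ_iff.mp i.2)]
  simp [binR3, hcol, coeff_X_add_one_pow]

lemma map_charpoly_binR3 {R : Type*} [CommRing R] (f : ZMod 3 →+* R) (N : ℕ) :
    (binR3 (N + 1)).charpoly.map f = (symPowMatrix N !![0, 1; 1, 1]).charpoly := by
  rw [← charpoly_map, binR3_map_eq, charpoly_transpose, charpoly_reindex]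

noncomputable def goldenPoly : (ZMod 3)[X] := X ^ 2 - X - 1

/-- `𝔽₉ = (ℤ/3ℤ)[φ]` with `φ ^ 2 = φ + 1`; here `φ` is a primitive 8th root of unity and
`1 - φ = φ ^ 3` is its conjugate. -/
abbrev GoldenZMod3 := AdjoinRoot goldenPoly

namespace GoldenZMod3

noncomputable def φ : GoldenZMod3 := AdjoinRoot.root _

lemma φ_sq : φ ^ 2 = φ + 1 := by
  have h : AdjoinRoot.mk goldenPoly (X ^ 2 - X - 1) = 0 := AdjoinRoot.mk_self
  simp only [map_sub, map_pow, AdjoinRoot.mk_X, map_one] at h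
  unfold φ; linear_combination h

lemma three_eq_zero : (3 : GoldenZMod3) = 0 := by
  rw [← map_ofNat (algebraMap (ZMod 3) GoldenZMod3) 3, show (OfNat.ofNat 3 : ZMod 3) = 0 from rfl,
    map_zero]

lemma algebraMap_injective : Function.Injective (algebraMap (ZMod 3) GoldenZMod3) :=
  AdjoinRoot.of.injective_of_degree_ne_zero (by
    rw [show goldenPoly.degree = 2 by unfold goldenPoly; compute_degree!]; decide)

lemma one_sub_φ : 1 - φ = φ ^ 3 := by linear_combination (-φ - 1) * φ_sq - φ * three_eq_zero

lemma φ_pow_four : φ ^ 4 = -1 := by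
  linear_combination (φ ^ 2 + φ + 2) * φ_sq + (φ + 1) * three_eq_zero

lemma isUnit_eigenbasis : IsUnit !![1, 1; 1 - φ, φ] := by
  rw [isUnit_iff_isUnit_det, det_fin_two_of]
  refine IsUnit.of_mul_eq_one (-(φ - 1) ^ 2) ?_
  linear_combination (3 - 2 * φ) * φ_sq + (1 - φ) * three_eq_zero

lemma fib_mul_eigenbasis : !![0, 1; 1, 1] * !![1, 1; 1 - φ, φ] =
    !![1, 1; 1 - φ, φ] * diagonal ![1 - φ, φ] := by
  rw [diagonal_vec2, mul_fin_two, mul_fin_two]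
  simp only [EmbeddingLike.apply_eq_iff_eq, vecCons_inj, and_true]
  exact ⟨⟨by ring, by ring⟩, by linear_combination -φ_sq, by linear_combination -φ_sq⟩

lemma prod_range_four_X_sub_C_φ_pow {c : ℕ} (hc : Odd c) :
    ∏ r ∈ range 4, (X - C (φ ^ (c + 2 * r))) = X ^ 4 + 1 := by
  have hi : (φ ^ 2) ^ 2 = -1 := by rw [← pow_mul, φ_pow_four]
  simp_rw [pow_add, pow_mul]
  rw [prod_range_four_X_sub_C_mul_pow hi, ← pow_mul, mul_comm, pow_mul, φ_pow_four,
    hc.neg_one_pow, C_neg, C_1, sub_neg_eq_add]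

lemma prod_range_mul_four_X_sub_C_φ_pow (k : ℕ) {c : ℕ} (hc : Odd c) :
    ∏ j ∈ range (4 * k), (X - C (φ ^ (c + 2 * j))) = (X ^ 4 + 1) ^ k := by
  induction k generalizing c with
  | zero => simp
  | succ k ih =>
    rw [mul_add_one, add_comm, prod_range_add, prod_range_four_X_sub_C_φ_pow hc,
      pow_succ' (X ^ 4 + 1 : GoldenZMod3[X])]
    refine congrArg _ ((prod_congr rfl fun j _ => ?_).trans
      (ih (hc.add_even (by decide : Even 8))))
    rw [show c + 2 * (4 + j) = c + 8 + 2 * j by ring]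

lemma charpoly_symPowMatrix_fib (N : ℕ) :
    (symPowMatrix N !![(0 : GoldenZMod3), 1; 1, 1]).charpoly =
      ∏ j ∈ range (N + 1), (X - C (φ ^ (N + 2 * j))) := by
  rw [charpoly_symPowMatrix_of_mul_eq isUnit_eigenbasis fib_mul_eigenbasis, cons_val_zero,
    cons_val_one, cons_val_zero,
    Fin.prod_univ_eq_prod_range (fun j => X - C ((1 - φ) ^ j * φ ^ (N - j)))]
  refine prod_congr rfl fun j hj => ?_
  rw [one_sub_φ, ← pow_mul, ← pow_add]
  congr 3
  have := mem_range.mp hj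
  omega

lemma prod_range_four_mul_add_two_X_sub_C_φ_pow (k : ℕ) :
    ∏ j ∈ range (4 * k + 1 + 1), (X - C (φ ^ (4 * k + 1 + 2 * j))) =
      (X ^ 4 + 1) ^ k * (X ^ 2 - C ((-1) ^ k) * X - 1) := by
  have hblocks : ∏ j ∈ range (4 * k), (X - C (φ ^ (4 * k + 1 + 2 * (2 + j)))) = (X ^ 4 + 1) ^ k :=
    (prod_congr rfl fun j _ => by
      rw [show 4 * k + 1 + 2 * (2 + j) = 4 * k + 5 + 2 * j by ring]).trans
        (prod_range_mul_four_X_sub_C_φ_pow k ⟨2 * k + 2, by ring⟩)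
  have hs : C ((-1 : GoldenZMod3) ^ k) ^ 2 = 1 := by
    rw [← C_pow, ← pow_mul, mul_comm, pow_mul, neg_one_sq, one_pow, C_1]
  have hφ : C φ ^ 2 = C φ + 1 := by rw [← C_pow, φ_sq, C_add, C_1]
  have h4k : φ ^ (4 * k) = (-1) ^ k := by rw [pow_mul, φ_pow_four]
  rw [show 4 * k + 1 + 1 = 2 + 4 * k by ring, prod_range_add, hblocks, mul_comm,
    prod_range_succ, prod_range_one, mul_zero, add_zero, mul_one, pow_succ φ (4 * k), h4k,
    show 4 * k + 1 + 2 = 4 * k + 3 by ring, pow_add, h4k, ← one_sub_φ, C_mul, C_mul,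
    C_sub, C_1]
  linear_combination (X ^ 4 + 1) ^ k * (C φ * (1 - C φ) * hs - hφ)

end GoldenZMod3

open GoldenZMod3

theorem stmt_8 (k : ℕ) :
    (binR3 (4 * k + 2)).charpoly =
      if Even k then ((X ^ 4 + 1 : (ZMod 3)[X]) ^ k * (X ^ 2 - X - 1))
      else ((X ^ 4 + 1 : (ZMod 3)[X]) ^ k * (X ^ 2 + X - 1)) := by
  apply map_injective _ algebraMap_injective
  rw [map_charpoly_binR3 _ (4 * k + 1), charpoly_symPowMatrix_fib,
    prod_range_four_mul_add_two_X_sub_C_φ_pow]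
  rcases Nat.even_or_odd k with hk | hk
  · simp [hk, hk.neg_one_pow]
  · simp [Nat.not_even_iff_odd.mpr hk, hk.neg_one_pow]
end

section
/- Let φ = (1+√5)/2 and φ̄ = (1−√5)/2. For every integer k ≥ 1, the characteristic polynomial of the 2k×2k matrix R_{2k}, viewed over ℝ, factors as det(x·I − R_{2k}) = ∏_{i=1}^{k} (x − (−1)^{k+i} φ^{2i−1}) (x − (−1)^{k+i} φ̄^{2i−1}); that is, the eigenvalues of R_{2k}, with multiplicity, are exactly {(−1)^{k+i} φ^{2i−1}, (−1)^{k+i} φ̄^{2i−1} : i = 1, …, k}. -/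
/-
Identify `v : Fin n → ℝ` with the polynomial `p = ∑ vᵢ Xⁱ` of degree `< n`. Then `R_nᵀ` acts as
`p ↦ reflect (n - 1) (p(X + 1))`. Since `φ + ψ = 1` and `φψ = -1`, the shift of `X - φ` is
`X + ψ = ψ · reflect 1 (X - φ)`, and symmetrically for `X - ψ`; so `(X - φ)^a (X - ψ)^b` with
`a + b = n - 1` is an eigenvector of `R_nᵀ` with eigenvalue `ψ^a φ^b`. These `n` eigenvalues are
distinct (`|ψ^a φ^b| = φ^(b - a)`), so they are all the roots of the characteristic polynomial, each
simple. For `n = 2k`, pairing `a = k - i` with `a = k - 1 + i` gives the stated factors.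
-/

open Polynomial

/-- `R n` over `ℝ`: the `(i,j)` entry (1-based) is `C(i-1, n-j)`. -/
def binRR (n : ℕ) : Matrix (Fin n) (Fin n) ℝ :=
  fun i j => (Nat.choose i (n - 1 - j) : ℝ)

open Matrix Real goldenRatio

section TaylorReflect

variable {R : Type*} [CommRing R]

theorem reflect_one_X_sub_C (r : R) : reflect 1 (X - C r) = 1 - C r * X := by
  simp [reflect_sub, reflect_C]

theorem taylor_X_sub_C_eq_C_mul_reflect {t r s : R} (hsum : r + s = t) (hprod : r * s = -1) :
    taylor t (X - C r) = C s * reflect 1 (X - C r) := by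
  rw [reflect_one_X_sub_C, mul_sub, mul_one, ← mul_assoc, ← C_mul, mul_comm s, hprod, map_sub,
    taylor_X, taylor_C, ← hsum, C_add, C_neg, C_1]
  ring

theorem taylor_mul_eq_C_mul_reflect {t c d : R} {p q : R[X]} {M N : ℕ}
    (hp : p.natDegree ≤ M) (hq : q.natDegree ≤ N)
    (hpc : taylor t p = C c * reflect M p) (hqd : taylor t q = C d * reflect N q) :
    taylor t (p * q) = C (c * d) * reflect (M + N) (p * q) := by
  rw [taylor_mul, reflect_mul p q hp hq, hpc, hqd, C_mul]
  ring

theorem taylor_pow_eq_C_mul_reflect {t c : R} {p : R[X]} {N : ℕ}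
    (hp : p.natDegree ≤ N) (hpc : taylor t p = C c * reflect N p) (a : ℕ) :
    taylor t (p ^ a) = C (c ^ a) * reflect (a * N) (p ^ a) := by
  induction a with
  | zero => simp
  | succ a ih =>
    rw [pow_succ, pow_succ, add_one_mul]
    exact taylor_mul_eq_C_mul_reflect (natDegree_pow_le_of_le a hp) hp ih hpc

theorem taylor_X_sub_C_pow_mul_eq_C_mul_reflect {t r s : R} (hsum : r + s = t)
    (hprod : r * s = -1) (a b : ℕ) :
    taylor t ((X - C r) ^ a * (X - C s) ^ b) =
      C (s ^ a * r ^ b) * reflect (a + b) ((X - C r) ^ a * (X - C s) ^ b) := by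
  have hr := taylor_pow_eq_C_mul_reflect (natDegree_X_sub_C_le r)
    (taylor_X_sub_C_eq_C_mul_reflect hsum hprod) a
  have hs := taylor_pow_eq_C_mul_reflect (natDegree_X_sub_C_le s)
    (taylor_X_sub_C_eq_C_mul_reflect (by rw [add_comm, hsum]) (by rw [mul_comm, hprod])) b
  rw [mul_one] at hr hs
  exact taylor_mul_eq_C_mul_reflect
    ((natDegree_pow_le_of_le a (natDegree_X_sub_C_le r)).trans_eq (mul_one a))
    ((natDegree_pow_le_of_le b (natDegree_X_sub_C_le s)).trans_eq (mul_one b)) hr hs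

end TaylorReflect

theorem coeff_taylor_one_eq_sum_choose {R : Type*} [CommSemiring R] {p : R[X]} {N : ℕ}
    (hp : p.natDegree < N) (m : ℕ) :
    (taylor 1 p).coeff m = ∑ j ∈ Finset.range N, (j.choose m : R) * p.coeff j := by
  conv_lhs => rw [p.as_sum_range' N hp]
  simp only [map_sum, finsetSum_coeff, taylor_monomial, coeff_C_mul, coeff_X_add_C_pow, one_pow,
    mul_one, mul_comm]

theorem binRR_transpose_mulVec_coeff {n : ℕ} {p : ℝ[X]} (hp : p.natDegree < n) :
    (binRR n)ᵀ *ᵥ (fun i : Fin n => p.coeff i) =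
      fun i : Fin n => (taylor 1 p).coeff (n - 1 - i) := by
  ext i
  rw [coeff_taylor_one_eq_sum_choose hp, ← Fin.sum_univ_eq_sum_range]
  rfl

theorem binRR_transpose_mulVec_coeff_of_taylor_eq {n : ℕ} {p : ℝ[X]} {c : ℝ}
    (hp : p.natDegree < n) (hpc : taylor 1 p = C c * reflect (n - 1) p) :
    (binRR n)ᵀ *ᵥ (fun i : Fin n => p.coeff i) = c • fun i : Fin n => p.coeff i := by
  ext i
  simp only [binRR_transpose_mulVec_coeff hp, hpc, coeff_C_mul, coeff_reflect, Pi.smul_apply,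
    smul_eq_mul]
  rw [revAt_le (Nat.sub_le _ _), Nat.sub_sub_self (Nat.le_sub_one_of_lt i.2)]

theorem Matrix.isRoot_charpoly_of_mulVec_eq_smul {ι K : Type*} [Fintype ι] [DecidableEq ι]
    [CommRing K] [IsDomain K] {A : Matrix ι ι K} {v : ι → K} {μ : K} (hv : v ≠ 0)
    (hAv : A *ᵥ v = μ • v) : A.charpoly.IsRoot μ := by
  rw [IsRoot, eval_charpoly, ← exists_mulVec_eq_zero_iff]
  refine ⟨v, hv, ?_⟩
  rw [sub_mulVec, hAv, sub_eq_zero]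
  ext i
  simp [mulVec_diagonal]

theorem Matrix.charpoly_eq_prod_X_sub_C_of_injective {ι K : Type*} [Fintype ι] [DecidableEq ι]
    [Field K] {A : Matrix ι ι K} {μ : ι → K} (hμ : Function.Injective μ)
    (hroot : ∀ i, A.charpoly.IsRoot (μ i)) : A.charpoly = ∏ i, (X - C (μ i)) := by
  refine eq_of_monic_of_dvd_of_natDegree_le (monic_prod_of_monic _ _ fun i _ => monic_X_sub_C _)
    A.charpoly_monic ?_ ?_
  · exact Fintype.prod_dvd_of_coprime (pairwise_coprime_X_sub_C hμ)
      fun i => dvd_iff_isRoot.mpr (hroot i)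
  · simp

theorem abs_goldenConj_pow_mul_goldenRatio_pow_mul_goldenRatio_pow {a m : ℕ} (ha : a ≤ m) :
    |ψ ^ a * φ ^ (m - a)| * φ ^ (2 * a) = φ ^ m := by
  rw [abs_mul, abs_pow, abs_pow, abs_of_neg goldenConj_neg, ← inv_goldenRatio,
    abs_of_pos goldenRatio_pos, inv_pow, two_mul, pow_add]
  field_simp
  rw [← pow_add, Nat.add_sub_cancel' ha]

theorem injective_goldenConj_pow_mul_goldenRatio_pow (n : ℕ) :
    Function.Injective fun a : Fin n => ψ ^ (a : ℕ) * φ ^ (n - 1 - a) := by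
  intro a b (hab : ψ ^ (a : ℕ) * φ ^ (n - 1 - a) = ψ ^ (b : ℕ) * φ ^ (n - 1 - b))
  have ha := abs_goldenConj_pow_mul_goldenRatio_pow_mul_goldenRatio_pow (Nat.le_sub_one_of_lt a.2)
  have hb := abs_goldenConj_pow_mul_goldenRatio_pow_mul_goldenRatio_pow (Nat.le_sub_one_of_lt b.2)
  rw [hab, ← hb] at ha
  have hne : |ψ ^ (b : ℕ) * φ ^ (n - 1 - b)| ≠ 0 :=
    left_ne_zero_of_mul (hb.trans_ne (pow_ne_zero _ goldenRatio_ne_zero))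
  have := pow_right_injective₀ goldenRatio_pos one_lt_goldenRatio.ne' (mul_left_cancel₀ hne ha)
  omega

theorem charpoly_binRR (n : ℕ) :
    (binRR n).charpoly = ∏ a : Fin n, (X - C (ψ ^ (a : ℕ) * φ ^ (n - 1 - a))) := by
  rw [← charpoly_transpose]
  refine charpoly_eq_prod_X_sub_C_of_injective (injective_goldenConj_pow_mul_goldenRatio_pow n)
    fun a => ?_
  set p : ℝ[X] := (X - C φ) ^ (a : ℕ) * (X - C ψ) ^ (n - 1 - a) with hp
  have hmonic : p.Monic := ((monic_X_sub_C φ).pow _).mul ((monic_X_sub_C ψ).pow _)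
  have hdeg : p.natDegree = n - 1 := by
    rw [hp, natDegree_mul (pow_ne_zero _ (X_sub_C_ne_zero _)) (pow_ne_zero _ (X_sub_C_ne_zero _)),
      natDegree_pow, natDegree_pow, natDegree_X_sub_C, natDegree_X_sub_C]
    omega
  have hpc : taylor 1 p = C (ψ ^ (a : ℕ) * φ ^ (n - 1 - a)) * reflect (n - 1) p := by
    have := taylor_X_sub_C_pow_mul_eq_C_mul_reflect goldenRatio_add_goldenConj
      goldenRatio_mul_goldenConj a (n - 1 - a)
    rwa [Nat.add_sub_cancel' (Nat.le_sub_one_of_lt a.2)] at this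
  have hn := a.2
  refine isRoot_charpoly_of_mulVec_eq_smul (v := fun i : Fin n => p.coeff i) ?_
    (binRR_transpose_mulVec_coeff_of_taylor_eq (by omega) hpc)
  intro h
  have := congrFun h ⟨n - 1, by omega⟩
  simp only [Pi.zero_apply, ← hdeg] at this
  exact hmonic.ne_zero (leadingCoeff_eq_zero.mp this)

theorem Finset.prod_range_two_mul_eq_prod_Icc {M : Type*} [CommMonoid M] (f : ℕ → M) (k : ℕ) :
    ∏ a ∈ Finset.range (2 * k), f a = ∏ i ∈ Finset.Icc 1 k, f (k - i) * f (k - 1 + i) := by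
  induction k generalizing f with
  | zero => simp
  | succ k ih =>
    have hshift : ∀ i ∈ Finset.Icc 1 k,
        f (k - i + 1) * f (k - 1 + i + 1) = f (k + 1 - i) * f (k + 1 - 1 + i) := by
      intro i hi
      obtain ⟨hi1, hik⟩ := Finset.mem_Icc.mp hi
      rw [show k - i + 1 = k + 1 - i by omega, show k - 1 + i + 1 = k + 1 - 1 + i by omega]
    rw [Finset.prod_Icc_succ_top (by omega), mul_add_one, Finset.prod_range_succ',
      Finset.prod_range_succ, ih, Finset.prod_congr rfl hshift, Nat.sub_self,
      Nat.add_sub_cancel, show k + (k + 1) = 2 * k + 1 by omega]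
    ac_rfl

theorem goldenConj_pow_mul_goldenRatio_pow_add (m e : ℕ) :
    ψ ^ m * φ ^ (m + e) = (-1) ^ m * φ ^ e := by
  rw [pow_add, ← mul_assoc, ← mul_pow, goldenConj_mul_goldenRatio]

theorem goldenConj_pow_add_mul_goldenRatio_pow (m e : ℕ) :
    ψ ^ (m + e) * φ ^ m = (-1) ^ m * ψ ^ e := by
  rw [pow_add, mul_right_comm, ← mul_pow, goldenConj_mul_goldenRatio]

theorem stmt_16_general (k : ℕ) :
    (binRR (2 * k)).charpoly =
      ∏ i ∈ Finset.Icc 1 k,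
        ((X - C ((-1 : ℝ) ^ (k + i) * ((1 + Real.sqrt 5) / 2) ^ (2 * i - 1))) *
          (X - C ((-1 : ℝ) ^ (k + i) * ((1 - Real.sqrt 5) / 2) ^ (2 * i - 1)))) := by
  rw [charpoly_binRR, Fin.prod_univ_eq_prod_range (fun a => X - C (ψ ^ a * φ ^ (2 * k - 1 - a))),
    Finset.prod_range_two_mul_eq_prod_Icc]
  refine Finset.prod_congr rfl fun i hi => ?_
  obtain ⟨hi1, hik⟩ := Finset.mem_Icc.mp hi
  obtain ⟨m, rfl⟩ := Nat.exists_eq_add_of_le hik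
  obtain ⟨j, rfl⟩ := Nat.exists_eq_add_of_le' hi1
  have hsign : (-1 : ℝ) ^ (j + 1 + m + (j + 1)) = (-1) ^ m := by
    rw [show j + 1 + m + (j + 1) = m + 2 * (j + 1) by ring, pow_add, pow_mul, neg_one_sq, one_pow,
      mul_one]
  rw [show j + 1 + m - (j + 1) = m by omega,
    show 2 * (j + 1 + m) - 1 - m = m + (2 * j + 1) by omega,
    show j + 1 + m - 1 + (j + 1) = m + (2 * j + 1) by omega,
    show 2 * (j + 1 + m) - 1 - (m + (2 * j + 1)) = m by omega,
    goldenConj_pow_mul_goldenRatio_pow_add, goldenConj_pow_add_mul_goldenRatio_pow, hsign,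
    show 2 * (j + 1) - 1 = 2 * j + 1 by omega]

theorem stmt_16 (k : ℕ) (hk : 1 ≤ k) :
    (binRR (2 * k)).charpoly =
      ∏ i ∈ Finset.Icc 1 k,
        ((X - C ((-1 : ℝ) ^ (k + i) * ((1 + Real.sqrt 5) / 2) ^ (2 * i - 1))) *
          (X - C ((-1 : ℝ) ^ (k + i) * ((1 - Real.sqrt 5) / 2) ^ (2 * i - 1)))) :=
  stmt_16_general k
end

section
/- For every integer n ≥ 1, every integer e ≥ 1, and all indices i, j with 2 ≤ i ≤ n and 2 ≤ j ≤ n, the entries of R_n^e satisfy the recurrence F_{e-1} · (R_n^e)_{i,j} = F_e · (R_n^e)_{i-1,j} + F_{e+1} · (R_n^e)_{i-1,j-1} − F_e · (R_n^e)_{i,j-1}. -/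
namespace BinRAux

/-- Entries of `binR n ^ e` extended by `0` outside the index range. -/
def A (n e t j : ℕ) : ℤ :=
  if h : t < n ∧ j < n then (binR n ^ e) ⟨t, h.1⟩ ⟨j, h.2⟩ else 0

lemma A_eq (n e t j : ℕ) (ht : t < n) (hj : j < n) :
    A n e t j = (binR n ^ e) ⟨t, ht⟩ ⟨j, hj⟩ := dif_pos ⟨ht, hj⟩

lemma A_one (n t j : ℕ) :
    A n 1 t j = if t < n ∧ j < n then (Nat.choose t (n - 1 - j) : ℤ) else 0 := by
  by_cases h : t < n ∧ j < n
  · rw [A_eq n 1 t j h.1 h.2, if_pos h, pow_one]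
    rfl
  · rw [A, dif_neg h, if_neg h]

lemma pascal_int (t m : ℕ) (ht : 1 ≤ t) (hm : 1 ≤ m) :
    (Nat.choose t m : ℤ) = Nat.choose (t - 1) (m - 1) + Nat.choose (t - 1) m := by
  obtain ⟨t', rfl⟩ : ∃ t', t = t' + 1 := ⟨t - 1, by omega⟩
  obtain ⟨m', rfl⟩ : ∃ m', m = m' + 1 := ⟨m - 1, by omega⟩
  simp only [Nat.add_sub_cancel, Nat.choose_succ_succ]
  push_cast
  ring

lemma prod_expand (n e t j : ℕ) (ht : t < n) :
    A n (e + 1) t j =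
      ∑ s ∈ Finset.range n, (Nat.choose t (n - 1 - s) : ℤ) * A n e s j := by
  by_cases hj : j < n
  · rw [A_eq n (e + 1) t j ht hj, pow_succ', Matrix.mul_apply,
      ← Fin.sum_univ_eq_sum_range (fun s => (Nat.choose t (n - 1 - s) : ℤ) * A n e s j)]
    refine Finset.sum_congr rfl fun k _ => ?_
    rw [A_eq n e k j k.isLt hj]
    simp [binR]
  · have h0 : ∀ s ∈ Finset.range n, (Nat.choose t (n - 1 - s) : ℤ) * A n e s j = 0 := by
      intro s hs
      rw [A, dif_neg (by omega)]
      ring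
    rw [Finset.sum_eq_zero h0, A, dif_neg (by omega)]

lemma main (n : ℕ) : ∀ e : ℕ, ∀ t, 1 ≤ t → t < n → ∀ j : ℕ,
    (Nat.fib e : ℤ) * A n (e + 1) t (j + 1) + (Nat.fib (e + 1) : ℤ) * A n (e + 1) t j
      = (Nat.fib (e + 1) : ℤ) * A n (e + 1) (t - 1) (j + 1)
        + (Nat.fib (e + 2) : ℤ) * A n (e + 1) (t - 1) j := by
  intro e
  induction e with
  | zero =>
    intro t ht1 ht2 j
    rw [Nat.fib_zero, Nat.fib_one, Nat.fib_two]
    push_cast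
    simp only [A_one, zero_mul, one_mul, zero_add]
    by_cases hj1 : j + 1 < n
    · have hj : j < n := by omega
      rw [if_pos ⟨ht2, hj⟩, if_pos (⟨by omega, hj1⟩ : t - 1 < n ∧ j + 1 < n),
        if_pos (⟨by omega, hj⟩ : t - 1 < n ∧ j < n)]
      have hp := pascal_int t (n - 1 - j) ht1 (by omega)
      have hm : n - 1 - j - 1 = n - 1 - (j + 1) := by omega
      rw [hm] at hp
      linarith [hp]
    · by_cases hj : j < n
      · rw [if_pos ⟨ht2, hj⟩, if_neg (by omega : ¬(t - 1 < n ∧ j + 1 < n)),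
          if_pos (⟨by omega, hj⟩ : t - 1 < n ∧ j < n)]
        have h0 : n - 1 - j = 0 := by omega
        rw [h0, Nat.choose_zero_right, Nat.choose_zero_right]
        ring
      · rw [if_neg (by omega : ¬(t < n ∧ j < n)),
          if_neg (by omega : ¬(t - 1 < n ∧ j + 1 < n)),
          if_neg (by omega : ¬(t - 1 < n ∧ j < n))]
        ring
  | succ e IH =>
    intro t ht1 ht2 j
    have hn2 : 2 ≤ n := by omega
    have ht2' : t - 1 < n := by omega
    rw [prod_expand n (e + 1) t (j + 1) ht2, prod_expand n (e + 1) t j ht2,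
      prod_expand n (e + 1) (t - 1) (j + 1) ht2', prod_expand n (e + 1) (t - 1) j ht2',
      Finset.mul_sum, Finset.mul_sum, Finset.mul_sum, Finset.mul_sum,
      ← Finset.sum_add_distrib, ← Finset.sum_add_distrib, ← sub_eq_zero,
      ← Finset.sum_sub_distrib]
    have key : ∀ s ∈ Finset.range n,
        ((Nat.fib (e + 1) : ℤ) * ((Nat.choose t (n - 1 - s) : ℤ) * A n (e + 1) s (j + 1))
          + (Nat.fib (e + 2) : ℤ) * ((Nat.choose t (n - 1 - s) : ℤ) * A n (e + 1) s j))
          - ((Nat.fib (e + 2) : ℤ) * ((Nat.choose (t - 1) (n - 1 - s) : ℤ) * A n (e + 1) s (j + 1))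
          + (Nat.fib (e + 3) : ℤ) * ((Nat.choose (t - 1) (n - 1 - s) : ℤ) * A n (e + 1) s j))
        = (if s + 1 < n then (Nat.choose (t - 1) (n - 1 - (s + 1)) : ℤ) else 0)
            * ((Nat.fib (e + 1) : ℤ) * A n (e + 1) s (j + 1)
               + (Nat.fib (e + 2) : ℤ) * A n (e + 1) s j)
          - (if s = 0 then 0 else (Nat.choose (t - 1) (n - 1 - s) : ℤ)
            * ((Nat.fib (e + 1) : ℤ) * A n (e + 1) (s - 1) (j + 1)
               + (Nat.fib (e + 2) : ℤ) * A n (e + 1) (s - 1) j)) := by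
      intro s hs
      rw [Finset.mem_range] at hs
      have hfib2 : (Nat.fib (e + 2) : ℤ) = Nat.fib e + Nat.fib (e + 1) := by
        rw [Nat.fib_add_two]; push_cast; ring
      have hfib3 : (Nat.fib (e + 3) : ℤ) = Nat.fib (e + 1) + Nat.fib (e + 2) := by
        rw [show e + 3 = (e + 1) + 2 by ring, Nat.fib_add_two]; push_cast; ring
      by_cases hs1 : s + 1 < n
      · have hp := pascal_int t (n - 1 - s) ht1 (by omega)
        have hm : n - 1 - s - 1 = n - 1 - (s + 1) := by omega
        rw [hm] at hp
        rw [if_pos hs1]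
        by_cases hs0 : s = 0
        · subst hs0
          have hz : (Nat.choose (t - 1) (n - 1 - 0) : ℤ) = 0 := by
            rw [Nat.choose_eq_zero_of_lt (by omega)]; rfl
          rw [if_pos rfl, sub_zero, hp, hz]
          ring
        · have hIH := IH s (by omega) hs j
          rw [if_neg hs0, hp]
          linear_combination (-((Nat.choose (t - 1) (n - 1 - s) : ℤ))) * hIH
            - ((Nat.choose (t - 1) (n - 1 - s) : ℤ)) * (A n (e + 1) s (j + 1)) * hfib2
            - ((Nat.choose (t - 1) (n - 1 - s) : ℤ)) * (A n (e + 1) s j) * hfib3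
      · have h0 : n - 1 - s = 0 := by omega
        have hs0 : s ≠ 0 := by omega
        have hIH := IH s (by omega) hs j
        rw [if_neg hs1, if_neg hs0, h0, Nat.choose_zero_right, Nat.choose_zero_right]
        push_cast
        linear_combination (-1 : ℤ) * hIH
          - (A n (e + 1) s (j + 1)) * hfib2 - (A n (e + 1) s j) * hfib3
    rw [Finset.sum_congr rfl key]
    obtain ⟨m, rfl⟩ : ∃ m, n = m + 1 := ⟨n - 1, by omega⟩
    rw [Finset.sum_sub_distrib, sub_eq_zero]
    rw [Finset.sum_range_succ, if_neg (by omega), zero_mul, add_zero]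
    rw [Finset.sum_range_succ' (fun s => if s = 0 then 0
        else (Nat.choose (t - 1) (m + 1 - 1 - s) : ℤ)
          * ((Nat.fib (e + 1) : ℤ) * A (m + 1) (e + 1) (s - 1) (j + 1)
             + (Nat.fib (e + 2) : ℤ) * A (m + 1) (e + 1) (s - 1) j)) m]
    rw [if_pos rfl, add_zero]
    refine Finset.sum_congr rfl fun s hs => ?_
    rw [Finset.mem_range] at hs
    rw [if_pos (by omega), if_neg (by omega)]
    simp [Nat.add_sub_cancel]

end BinRAux

theorem stmt_19 (n e : ℕ) (hn : 1 ≤ n) (he : 1 ≤ e)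
    (i j : ℕ) (hi1 : 2 ≤ i) (hi2 : i ≤ n) (hj1 : 2 ≤ j) (hj2 : j ≤ n) :
    (Nat.fib (e - 1) : ℤ) * (binR n ^ e) ⟨i - 1, by omega⟩ ⟨j - 1, by omega⟩ =
      (Nat.fib e : ℤ) * (binR n ^ e) ⟨i - 2, by omega⟩ ⟨j - 1, by omega⟩ +
        (Nat.fib (e + 1) : ℤ) * (binR n ^ e) ⟨i - 2, by omega⟩ ⟨j - 2, by omega⟩ -
        (Nat.fib e : ℤ) * (binR n ^ e) ⟨i - 1, by omega⟩ ⟨j - 2, by omega⟩ := by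
  obtain ⟨e', rfl⟩ : ∃ e', e = e' + 1 := ⟨e - 1, by omega⟩
  have p1 : i - 1 < n := by omega
  have p2 : i - 2 < n := by omega
  have q1 : j - 1 < n := by omega
  have q2 : j - 2 < n := by omega
  have h := BinRAux.main n e' (i - 1) (by omega) p1 (j - 2)
  have hji : j - 2 + 1 = j - 1 := by omega
  have hii : i - 1 - 1 = i - 2 := by omega
  rw [hji, hii] at h
  rw [BinRAux.A_eq n (e' + 1) (i - 1) (j - 1) p1 q1,
    BinRAux.A_eq n (e' + 1) (i - 1) (j - 2) p1 q2,
    BinRAux.A_eq n (e' + 1) (i - 2) (j - 1) p2 q1,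
    BinRAux.A_eq n (e' + 1) (i - 2) (j - 2) p2 q2] at h
  have hee : e' + 1 - 1 = e' := by omega
  rw [hee]
  linarith [h]
end
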